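/- arXiv:math/0202248 — 3 statements merged into one kernel-verified Lean document; each statement's English description precedes it below -/
import Mathlib

section
/- For any connected graph G on the integer interval [a,b], the Brydges–Spencer lace L(G) obtained by the recursive edge-selection rule is itself a connected graph on [a,b], and it is minimally connected: removing any edge of L(G) disconnects it. -/
attribute [local instance] Classical.propDecidable

/-- A graph on the integer interval `[a,b]`: a finite set of edges `(s,t)` with
`a ≤ s < t ≤ b`. -/
def IsGraphOn (a b : ℕ) (G : Finset (ℕ × ℕ)) : Prop :=
  ∀ e ∈ G, a ≤ e.1 ∧ e.1 < e.2 ∧ e.2 ≤ b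

/-- A connected graph on `[a,b]`: both `a` and `b` are endpoints of edges, and
every interior point `c` is spanned by some edge `s < c < t`. -/
def IsConnGraphOn (a b : ℕ) (G : Finset (ℕ × ℕ)) : Prop :=
  IsGraphOn a b G ∧
  (∃ e ∈ G, e.1 = a ∨ e.2 = a) ∧ (∃ e ∈ G, e.1 = b ∨ e.2 = b) ∧
  ∀ c : ℕ, a < c → c < b → ∃ e ∈ G, e.1 < c ∧ c < e.2

/-- A lace on `[a,b]`: a minimally connected graph. -/
def IsLaceOn (a b : ℕ) (L : Finset (ℕ × ℕ)) : Prop :=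
  IsConnGraphOn a b L ∧ ∀ e ∈ L, ¬ IsConnGraphOn a b (L.erase e)

/-- Auxiliary recursion for the Brydges–Spencer lace selection: given the bound
`b`, remaining fuel, and the previous endpoint `t` (so that edges `s t'` with
`s < t` are admissible), choose `t' = max {t' : ∃ s < t, (s,t') ∈ G}` and
`s' = min {s : (s,t') ∈ G}`, stopping when `t' ≥ b`. -/
noncomputable def laceAux (G : Finset (ℕ × ℕ)) (b : ℕ) : ℕ → ℕ → Finset (ℕ × ℕ)
  | 0, _ => ∅
  | fuel + 1, t =>
    let t' := (G.filter (fun e => e.1 < t)).sup Prod.snd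
    let s' := sInf {s | (s, t') ∈ G}
    if b ≤ t' then {(s', t')} else insert (s', t') (laceAux G b fuel t')

/-- The Brydges–Spencer lace `L(G)` of a connected graph `G` on `[a,b]`:
`s₁ = a`, `t₁ = max {t : (a,t) ∈ G}`, and inductively
`t_{i+1} = max {t : ∃ s < t_i, (s,t) ∈ G}`, `s_{i+1} = min {s : (s,t_{i+1}) ∈ G}`,
stopping when `t_m = b`. -/
noncomputable def laceOf (a b : ℕ) (G : Finset (ℕ × ℕ)) : Finset (ℕ × ℕ) :=
  laceAux G b (b + 1) (a + 1)

/-- An edge `e ∉ L` is compatible with the lace `L` iff the lace of `L ∪ {e}`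
is `L` itself. -/
def Compatible (a b : ℕ) (L : Finset (ℕ × ℕ)) (e : ℕ × ℕ) : Prop :=
  e ∉ L ∧ laceOf a b (insert e L) = L

lemma laceAux_succ (G : Finset (ℕ × ℕ)) (b fuel t : ℕ) :
    laceAux G b (fuel + 1) t =
      (if b ≤ (G.filter (fun e => e.1 < t)).sup Prod.snd
       then {(sInf {s | (s, (G.filter (fun e => e.1 < t)).sup Prod.snd) ∈ G},
              (G.filter (fun e => e.1 < t)).sup Prod.snd)}
       else insert
              (sInf {s | (s, (G.filter (fun e => e.1 < t)).sup Prod.snd) ∈ G},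
               (G.filter (fun e => e.1 < t)).sup Prod.snd)
              (laceAux G b fuel ((G.filter (fun e => e.1 < t)).sup Prod.snd))) := rfl

lemma laceAux_spec (a b : ℕ) (G : Finset (ℕ × ℕ)) (hG : IsConnGraphOn a b G) :
    ∀ fuel t, a < t → t ≤ b → b < fuel + t → (∃ e ∈ G, e.1 < t ∧ t ≤ e.2) →
    ((sInf {s | (s, (G.filter (fun f => f.1 < t)).sup Prod.snd) ∈ G},
        (G.filter (fun f => f.1 < t)).sup Prod.snd) ∈ laceAux G b fuel t) ∧
    (sInf {s | (s, (G.filter (fun f => f.1 < t)).sup Prod.snd) ∈ G} < t) ∧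
    (t ≤ (G.filter (fun f => f.1 < t)).sup Prod.snd) ∧
    laceAux G b fuel t ⊆ G ∧
    (∀ e ∈ laceAux G b fuel t, (G.filter (fun f => f.1 < t)).sup Prod.snd ≤ e.2) ∧
    (∀ e ∈ laceAux G b fuel t, t ≤ e.1 ∨
        e = (sInf {s | (s, (G.filter (fun f => f.1 < t)).sup Prod.snd) ∈ G},
             (G.filter (fun f => f.1 < t)).sup Prod.snd)) ∧
    (∀ c, t ≤ c → c < b → ∃ e ∈ laceAux G b fuel t, e.1 < c ∧ c < e.2) ∧
    (∃ e ∈ laceAux G b fuel t, e.2 = b) ∧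
    (∀ e ∈ laceAux G b fuel t,
      (∃ c, t ≤ c ∧ c < b ∧ ∀ f ∈ (laceAux G b fuel t).erase e, ¬(f.1 < c ∧ c < f.2)) ∨
      (∀ f ∈ (laceAux G b fuel t).erase e, f.2 ≠ b)) := by
  intro fuel
  induction fuel with
  | zero => intro t ht htb hfuel _; omega
  | succ fuel ih =>
    intro t ht htb hfuel hwit
    set T := (G.filter (fun f => f.1 < t)).sup Prod.snd with hTdef
    set S := sInf {s | (s, T) ∈ G} with hSdef
    obtain ⟨e₀, he₀G, he₀1, he₀2⟩ := hwit
    have he₀f : e₀ ∈ G.filter (fun f => f.1 < t) := Finset.mem_filter.mpr ⟨he₀G, he₀1⟩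
    have htT : t ≤ T := le_trans he₀2 (Finset.le_sup (f := Prod.snd) he₀f)
    have hTb : T ≤ b := Finset.sup_le (fun f hf => (hG.1 f (Finset.mem_of_mem_filter f hf)).2.2)
    have hmax : ∀ e ∈ G, e.1 < t → e.2 ≤ T := fun e he h1 =>
      Finset.le_sup (f := Prod.snd) (Finset.mem_filter.mpr ⟨he, h1⟩)
    obtain ⟨f₀, hf₀, hf₀T⟩ :=
      Finset.exists_mem_eq_sup (G.filter (fun f => f.1 < t)) ⟨e₀, he₀f⟩ Prod.snd
    rw [← hTdef] at hf₀T
    have hf₀G : f₀ ∈ G := Finset.mem_of_mem_filter f₀ hf₀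
    have hf₀1 : f₀.1 < t := (Finset.mem_filter.mp hf₀).2
    have hf₀mem : f₀.1 ∈ {s | (s, T) ∈ G} := by
      simp only [Set.mem_setOf_eq, hf₀T]; exact hf₀G
    have hST : (S, T) ∈ G := Nat.sInf_mem ⟨f₀.1, hf₀mem⟩
    have hSt : S < t := lt_of_le_of_lt (Nat.sInf_le hf₀mem) hf₀1
    have hSTbounds := hG.1 (S, T) hST
    have hL := laceAux_succ G b fuel t
    rw [← hTdef, ← hSdef] at hL
    by_cases hb : b ≤ T
    · have hTeqb : T = b := le_antisymm hTb hb
      rw [if_pos hb] at hL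
      rw [hL]
      refine ⟨Finset.mem_singleton_self _, hSt, htT, ?_, ?_, ?_, ?_, ?_, ?_⟩
      · intro e he; rw [Finset.mem_singleton] at he; subst he; exact hST
      · intro e he; rw [Finset.mem_singleton] at he; subst he; exact le_refl _
      · intro e he; exact Or.inr (Finset.mem_singleton.mp he)
      · intro c hc hcb
        exact ⟨(S, T), Finset.mem_singleton_self _, lt_of_lt_of_le hSt hc, by omega⟩
      · exact ⟨(S, T), Finset.mem_singleton_self _, hTeqb⟩
      · intro e he
        rw [Finset.mem_singleton] at he; subst he
        right; intro f hf
        rw [Finset.erase_singleton] at hf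
        exact absurd hf (Finset.notMem_empty f)
    · push_neg at hb
      rw [if_neg (not_le.mpr hb)] at hL
      -- t < b and t < T
      have htb' : t < b := lt_of_le_of_lt htT hb
      have htT' : t < T := by
        obtain ⟨e₁, he₁G, he₁1, he₁2⟩ := hG.2.2.2 t ht htb'
        exact lt_of_lt_of_le he₁2 (hmax e₁ he₁G he₁1)
      set L' := laceAux G b fuel T with hL'def
      obtain ⟨h1', h2', h3', h4', h5', h6', h7', h8', h9'⟩ :=
        ih T (lt_trans ht htT') (le_of_lt hb) (by omega)
          ⟨(S, T), hST, hSTbounds.2.1, le_refl T⟩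
      set T₂ := (G.filter (fun f => f.1 < T)).sup Prod.snd with hT₂def
      set S₂ := sInf {s | (s, T₂) ∈ G} with hS₂def
      have hmaxT : ∀ e ∈ G, e.1 < T → e.2 ≤ T₂ := fun e he h1 =>
        Finset.le_sup (f := Prod.snd) (Finset.mem_filter.mpr ⟨he, h1⟩)
      have hTT₂ : T < T₂ := by
        obtain ⟨e₁, he₁G, he₁1, he₁2⟩ := hG.2.2.2 T (lt_trans ht htT') hb
        exact lt_of_lt_of_le he₁2 (hmaxT e₁ he₁G he₁1)
      have hfirstnot : (S, T) ∉ L' := by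
        intro h
        have := h5' _ h
        simp only at this
        omega
      have hS₂G : (S₂, T₂) ∈ G := h4' h1'
      have hS₂t : t ≤ S₂ := by
        by_contra h
        push_neg at h
        have := hmax (S₂, T₂) hS₂G h
        simp only at this
        omega
      rw [hL]
      refine ⟨Finset.mem_insert_self _ _, hSt, htT, ?_, ?_, ?_, ?_, ?_, ?_⟩
      · intro e he
        rcases Finset.mem_insert.mp he with h | h
        · subst h; exact hST
        · exact h4' h
      · intro e he
        rcases Finset.mem_insert.mp he with h | h
        · subst h; exact le_refl _
        · exact le_trans (le_of_lt hTT₂) (h5' e h)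
      · intro e he
        rcases Finset.mem_insert.mp he with h | h
        · exact Or.inr h
        · left
          rcases h6' e h with h' | h'
          · exact le_trans (le_of_lt htT') h'
          · subst h'; exact hS₂t
      · intro c hc hcb
        rcases lt_or_ge c T with h | h
        · exact ⟨(S, T), Finset.mem_insert_self _ _, lt_of_lt_of_le hSt hc, h⟩
        · obtain ⟨e, he, he1, he2⟩ := h7' c h hcb
          exact ⟨e, Finset.mem_insert_of_mem he, he1, he2⟩
      · obtain ⟨e, he, heb⟩ := h8'
        exact ⟨e, Finset.mem_insert_of_mem he, heb⟩
      · intro e he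
        rcases Finset.mem_insert.mp he with h | h
        · -- removing the first edge uncovers S₂
          subst h
          left
          refine ⟨S₂, hS₂t, lt_trans h2' hb, ?_⟩
          rw [Finset.erase_insert hfirstnot]
          intro f hf
          rcases h6' f hf with h' | h'
          · intro ⟨hc1, _⟩; omega
          · subst h'; intro ⟨hc1, _⟩; simp only at hc1; omega
        · have hne : (S, T) ≠ e := fun hEq => hfirstnot (hEq ▸ h)
          have herase : (insert (S, T) L').erase e = insert (S, T) (L'.erase e) :=
            Finset.erase_insert_of_ne hne
          rcases h9' e h with ⟨c, hc1, hc2, hc3⟩ | hright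
          · left
            refine ⟨c, le_trans (le_of_lt htT') hc1, hc2, ?_⟩
            rw [herase]
            intro f hf
            rcases Finset.mem_insert.mp hf with h' | h'
            · subst h'; intro ⟨_, hc5⟩; simp only at hc5; omega
            · exact hc3 f h'
          · right
            rw [herase]
            intro f hf
            rcases Finset.mem_insert.mp hf with h' | h'
            · subst h'; simp only; omega
            · exact hright f h'

/-- for a connected graph `G` on `[a,b]`, the Brydges–Spencer lace
`L(G)` is a subset of `G`, is connected, and is minimally connected (removing
any of its edges disconnects it). -/
theorem laceOf_isLace (a b : ℕ) (hab : a < b)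
    (G : Finset (ℕ × ℕ)) (hG : IsConnGraphOn a b G) :
    laceOf a b G ⊆ G ∧ IsLaceOn a b (laceOf a b G) := by
  have hwit0 : ∃ e ∈ G, e.1 < a + 1 ∧ a + 1 ≤ e.2 := by
    obtain ⟨e, heG, he⟩ := hG.2.1
    have hb := hG.1 e heG
    exact ⟨e, heG, by omega⟩
  obtain ⟨h1, h2, h3, h4, h5, h6, h7, h8, h9⟩ :=
    laceAux_spec a b G hG (b + 1) (a + 1) (by omega) (by omega) (by omega) hwit0
  rw [show laceOf a b G = laceAux G b (b + 1) (a + 1) from rfl]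
  set T := (G.filter (fun f => f.1 < a + 1)).sup Prod.snd with hTdef
  set S := sInf {s | (s, T) ∈ G} with hSdef
  set L := laceAux G b (b + 1) (a + 1) with hLdef
  have hSTG : (S, T) ∈ G := h4 h1
  have hSa : S = a := by
    have := hG.1 (S, T) hSTG
    omega
  have hgraph : IsGraphOn a b L := fun e he => hG.1 e (h4 he)
  refine ⟨h4, ⟨hgraph, ⟨(S, T), h1, Or.inl hSa⟩, ?_, ?_⟩, ?_⟩
  · obtain ⟨e, he, heb⟩ := h8
    exact ⟨e, he, Or.inr heb⟩
  · intro c hac hcb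
    exact h7 c (by omega) hcb
  · intro e he hconn
    rcases h9 e he with ⟨c, hc1, hc2, hc3⟩ | hright
    · obtain ⟨f, hf, hf1, hf2⟩ := hconn.2.2.2 c (by omega) hc2
      exact hc3 f hf ⟨hf1, hf2⟩
    · obtain ⟨f, hf, hfb⟩ := hconn.2.2.1
      have hfG : f ∈ G := h4 (Finset.mem_of_mem_erase hf)
      have := hG.1 f hfG
      rcases hfb with h | h
      · omega
      · exact hright f hf h
end

section
/- A lace on [0,n] with N edges is completely determined by the sequence of interval lengths m = (m_1, ..., m_{2N-1}) with m_1 + ... + m_{2N-1} = n, where m_1 ≥ 1, m_{2N-1} ≥ 1, m_{2j} ≥ 1 for 1 ≤ j ≤ N-1, and m_{2j+1} ≥ 0 for 1 ≤ j ≤ N-1. That is, there is a bijection between the set of N-edge laces on [0,n] and the set of such sequences. -/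
attribute [local instance] Classical.propDecidable

/-- Partial sums `S k = m_1 + ⋯ + m_k` of a sequence of interval lengths. -/
def partialSum {M : ℕ} (m : Fin M → ℕ) (k : ℕ) : ℕ :=
  ∑ i ∈ Finset.range k, (if h : i < M then m ⟨i, h⟩ else 0)

/-- The `N`-edge lace on `[0,n]` determined by interval lengths
`m = (m_1, …, m_{2N-1})`: its edges are `(s_i, t_i)`, `i = 1, …, N`, with
`s_1 = 0`, `s_i = S(2i-3)` for `i ≥ 2`, `t_i = S(2i)` for `i ≤ N-1`, and
`t_N = S(2N-1)`, where `S k` denotes the `k`-th partial sum of `m`.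
(Edge `i` below is `0`-indexed.) -/
def laceFromSeq (N : ℕ) (m : Fin (2 * N - 1) → ℕ) : Finset (ℕ × ℕ) :=
  (Finset.range N).image (fun i =>
    ((if i = 0 then 0 else partialSum m (2 * i - 1)),
     (if i = N - 1 then partialSum m (2 * N - 1) else partialSum m (2 * i + 2))))

/-- The admissible sequences of interval lengths: `m_1 + ⋯ + m_{2N-1} = n`,
`m_1 ≥ 1`, `m_{2N-1} ≥ 1`, `m_{2j} ≥ 1` for `1 ≤ j ≤ N-1` (and `m_{2j+1} ≥ 0`
automatically).  Indices below are `0`-based: `m_k` is `m ⟨k-1, _⟩`. -/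
def SeqCond (N n : ℕ) (m : Fin (2 * N - 1) → ℕ) : Prop :=
  (∑ i, m i) = n ∧
  (∀ h : 0 < 2 * N - 1, 1 ≤ m ⟨0, h⟩) ∧
  (∀ h : 2 * N - 2 < 2 * N - 1, 1 ≤ m ⟨2 * N - 2, h⟩) ∧
  (∀ j : ℕ, 1 ≤ j → j ≤ N - 1 → ∀ h : 2 * j - 1 < 2 * N - 1, 1 ≤ m ⟨2 * j - 1, h⟩)

namespace LaceAux

open Finset

/-! ### partial sums -/

lemma partialSum_zero {M : ℕ} (m : Fin M → ℕ) : partialSum m 0 = 0 := rfl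

lemma partialSum_succ {M : ℕ} (m : Fin M → ℕ) (k : ℕ) :
    partialSum m (k+1) = partialSum m k + (if h : k < M then m ⟨k, h⟩ else 0) :=
  Finset.sum_range_succ _ _

lemma partialSum_mono {M : ℕ} (m : Fin M → ℕ) : Monotone (partialSum m) :=
  fun _ _ h => Finset.sum_le_sum_of_subset (Finset.range_subset_range.2 h)

lemma partialSum_lt {M : ℕ} (m : Fin M → ℕ) {k l j : ℕ} (hj : j < M)
    (h1 : k ≤ j) (h2 : j < l) (hm : 1 ≤ m ⟨j, hj⟩) :
    partialSum m k < partialSum m l := by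
  have hs : partialSum m (j + 1) = partialSum m j + m ⟨j, hj⟩ := by
    rw [partialSum_succ, dif_pos hj]
  have h3 : partialSum m k ≤ partialSum m j := partialSum_mono m h1
  have h4 : partialSum m (j + 1) ≤ partialSum m l := partialSum_mono m h2
  omega

lemma partialSum_all {M : ℕ} (m : Fin M → ℕ) : partialSum m M = ∑ i, m i := by
  rw [partialSum, ← Fin.sum_univ_eq_sum_range (fun j => if h : j < M then m ⟨j, h⟩ else 0) M]
  exact Finset.sum_congr rfl fun i _ => by rw [dif_pos i.isLt, Fin.eta]

/-! ### interlaced families -/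

def Fam (N n : ℕ) (s t : ℕ → ℕ) : Prop :=
  s 0 = 0 ∧ t (N-1) = n ∧ (∀ i, i < N → s i < t i) ∧
  (∀ i, i+1 < N → s (i+1) < t i) ∧
  (∀ i, i+2 < N → t i ≤ s (i+2)) ∧ (1 < N → 0 < s 1) ∧ (1 < N → t (N-2) < t (N-1))

variable {N n : ℕ} {s t : ℕ → ℕ}

lemma Fam.slt (hf : Fam N n s t) : ∀ i, i+1 < N → s i < s (i+1) := by
  intro i hi
  rcases Nat.eq_zero_or_pos i with h0 | h0
  · subst h0
    have h1 := hf.2.2.2.2.2.1 (by omega)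
    have h2 := hf.1
    have e : s (0+1) = s 1 := congrArg s (by omega)
    omega
  · obtain ⟨j, rfl⟩ := Nat.exists_eq_succ_of_ne_zero (by omega : i ≠ 0)
    have h1 : s (j+1) < t j := hf.2.2.2.1 j (by omega)
    have h2 : t j ≤ s (j + 2) := hf.2.2.2.2.1 j (by omega)
    have e : s (j+1+1) = s (j+2) := congrArg s (by omega)
    simp only [Nat.succ_eq_add_one]
    omega

lemma Fam.tlt (hf : Fam N n s t) : ∀ i, i+1 < N → t i < t (i+1) := by
  intro i hi
  by_cases h : i + 2 < N
  · have h1 : t i ≤ s (i+2) := hf.2.2.2.2.1 i h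
    have h2 : s (i+2) < t (i+1) := hf.2.2.2.1 (i+1) h
    omega
  · have hi2 : i = N - 2 := by omega
    have := hf.2.2.2.2.2.2 (by omega)
    have e1 : N - 2 = i := by omega
    have e2 : N - 1 = i + 1 := by omega
    rw [e1, e2] at this
    exact this

lemma Fam.sMono (hf : Fam N n s t) : ∀ j, j < N → ∀ i, i < j → s i < s j := by
  intro j
  induction j with
  | zero => omega
  | succ k ih =>
    intro hj i hi
    have hk : s k < s (k+1) := hf.slt k hj
    rcases Nat.lt_or_ge i k with h | h
    · exact (ih (by omega) i h).trans hk
    · have : i = k := by omega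
      subst this; exact hk

lemma Fam.tMono (hf : Fam N n s t) : ∀ j, j < N → ∀ i, i < j → t i < t j := by
  intro j
  induction j with
  | zero => omega
  | succ k ih =>
    intro hj i hi
    have hk : t k < t (k+1) := hf.tlt k hj
    rcases Nat.lt_or_ge i k with h | h
    · exact (ih (by omega) i h).trans hk
    · have : i = k := by omega
      subst this; exact hk

lemma Fam.t_le_n (hf : Fam N n s t) : ∀ i, i < N → t i ≤ n := by
  intro i hi
  rcases eq_or_lt_of_le (Nat.le_sub_one_of_lt hi) with h | h
  · rw [h]; exact hf.2.1.le
  · calc t i ≤ t (N-1) := (hf.tMono (N-1) (by omega) i h).le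
      _ = n := hf.2.1

/-! ### sequences to families -/

def sFun (N : ℕ) (m : Fin (2*N-1) → ℕ) (i : ℕ) : ℕ :=
  if i = 0 then 0 else partialSum m (2*i-1)

def tFun (N : ℕ) (m : Fin (2*N-1) → ℕ) (i : ℕ) : ℕ :=
  if i = N-1 then partialSum m (2*N-1) else partialSum m (2*i+2)

lemma laceFromSeq_eq (N : ℕ) (m : Fin (2*N-1) → ℕ) :
    laceFromSeq N m = (range N).image (fun i => (sFun N m i, tFun N m i)) := rfl

lemma fam_of_seq {N n : ℕ} (hN : 1 ≤ N) {m : Fin (2*N-1) → ℕ} (hm : SeqCond N n m) :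
    Fam N n (sFun N m) (tFun N m) := by
  obtain ⟨hsum, h0, hlast, hmid⟩ := hm
  have hM : 0 < 2*N-1 := by omega
  have hm0 : 1 ≤ m ⟨0, hM⟩ := h0 hM
  have hml : 1 ≤ m ⟨2*N-2, by omega⟩ := hlast (by omega)
  refine ⟨?_, ?_, ?_, ?_, ?_, ?_, ?_⟩
  · simp [sFun]
  · rw [tFun, if_pos rfl, partialSum_all, hsum]
  · intro i hi
    by_cases hi0 : i = 0
    · subst hi0
      rw [sFun, if_pos rfl, tFun]
      have h1 : partialSum m 0 < partialSum m (2*N-1) :=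
        partialSum_lt m hM (by omega) (by omega) hm0
      have h2 : partialSum m 0 < partialSum m (2*0+2) :=
        partialSum_lt m hM (by omega) (by omega) hm0
      rw [partialSum_zero] at h1 h2
      split
      · exact h1
      · exact h2
    · rw [sFun, if_neg hi0, tFun]
      by_cases hN1 : i = N - 1
      · rw [if_pos hN1]
        exact partialSum_lt m (by omega : 2*N-2 < 2*N-1) (by omega) (by omega) hml
      · rw [if_neg hN1]
        have hj : 2*(i+1)-1 < 2*N-1 := by omega
        have := hmid (i+1) (by omega) (by omega) hj
        exact partialSum_lt m hj (by omega) (by omega) this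
  · intro i hi
    have hj : 2*(i+1)-1 < 2*N-1 := by omega
    have h1 := hmid (i+1) (by omega) (by omega) hj
    rw [sFun, if_neg (by omega), tFun, if_neg (by omega)]
    exact partialSum_lt m hj (by omega) (by omega) h1
  · intro i hi
    rw [tFun, if_neg (by omega), sFun, if_neg (by omega)]
    exact partialSum_mono m (by omega)
  · intro h1N
    rw [sFun, if_neg one_ne_zero]
    have : partialSum m 0 < partialSum m (2*1-1) :=
      partialSum_lt m hM (by omega) (by omega) hm0
    simpa [partialSum_zero] using this
  · intro h1N
    rw [tFun, if_neg (by omega), tFun, if_pos rfl]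
    exact partialSum_lt m (by omega : 2*N-2 < 2*N-1) (by omega) (by omega) hml


/-! ### families to laces -/

lemma mem_fam_image {N : ℕ} {s t : ℕ → ℕ} {f : ℕ × ℕ} :
    f ∈ (range N).image (fun i => (s i, t i)) ↔ ∃ i, i < N ∧ (s i, t i) = f := by
  simp only [Finset.mem_image, Finset.mem_range, exists_prop]

lemma lace_of_fam {N n : ℕ} {s t : ℕ → ℕ} (hN : 1 ≤ N) (hf : Fam N n s t) :
    IsLaceOn 0 n ((range N).image fun i => (s i, t i)) ∧
      ((range N).image fun i => (s i, t i)).card = N := by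
  set E := (range N).image fun i => (s i, t i) with hE
  have hgraph : IsGraphOn 0 n E := by
    intro e he
    obtain ⟨i, hi, rfl⟩ := mem_fam_image.mp he
    exact ⟨Nat.zero_le _, hf.2.2.1 i hi, hf.t_le_n i hi⟩
  have hmem : ∀ i, i < N → (s i, t i) ∈ E := by
    intro i hi
    exact Finset.mem_image.mpr ⟨i, Finset.mem_range.mpr hi, rfl⟩
  have hconn : IsConnGraphOn 0 n E := by
    refine ⟨hgraph, ⟨(s 0, t 0), hmem 0 hN, Or.inl hf.1⟩,
      ⟨(s (N-1), t (N-1)), hmem (N-1) (by omega), Or.inr hf.2.1⟩, ?_⟩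
    intro c hc0 hcn
    have key : ∀ d k, k < N → N - 1 - k ≤ d → s k < c → ∃ i, i < N ∧ s i < c ∧ c < t i := by
      intro d
      induction d with
      | zero =>
        intro k hk hd hs
        have hkN : k = N - 1 := by omega
        subst hkN
        refine ⟨N-1, by omega, hs, ?_⟩
        rw [hf.2.1]; exact hcn
      | succ d ih =>
        intro k hk hd hs
        by_cases h : c < t k
        · exact ⟨k, hk, hs, h⟩
        · have hkN : k ≠ N - 1 := by
            rintro rfl
            rw [hf.2.1] at h
            omega
          have hk1 : k + 1 < N := by omega
          have hd1 : s (k+1) < t k := hf.2.2.2.1 k hk1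
          exact ih (k+1) hk1 (by omega) (by omega)
    obtain ⟨i, hi, h1, h2⟩ := key (N-1) 0 (by omega) (by omega) (by rw [hf.1]; exact hc0)
    exact ⟨(s i, t i), hmem i hi, h1, h2⟩
  have hinj : ∀ i j, i < N → j < N → (s i, t i) = (s j, t j) → i = j := by
    intro i j hi hj h
    by_contra hne
    rcases Nat.lt_or_ge i j with hlt | hge
    · have := hf.sMono j hj i hlt
      simp only [Prod.mk.injEq] at h
      omega
    · have := hf.sMono i hi j (by omega)
      simp only [Prod.mk.injEq] at h
      omega
  have hcard : E.card = N := by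
    rw [hE, Finset.card_image_of_injOn, Finset.card_range]
    intro i hi j hj h
    exact hinj i j (Finset.mem_range.mp hi) (Finset.mem_range.mp hj) h
  have herase : ∀ i, i < N → ∀ f ∈ E.erase (s i, t i), ∃ j, j < N ∧ j ≠ i ∧ f = (s j, t j) := by
    intro i hi f hfmem
    obtain ⟨hne, hfE⟩ := Finset.mem_erase.mp hfmem
    obtain ⟨j, hj, hje⟩ := mem_fam_image.mp hfE
    refine ⟨j, hj, ?_, hje.symm⟩
    rintro rfl
    exact hne hje.symm
  refine ⟨⟨hconn, ?_⟩, hcard⟩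
  intro e he hcontra
  obtain ⟨i, hi, rfl⟩ := mem_fam_image.mp he
  by_cases hi0 : i = 0
  · subst hi0
    obtain ⟨f, hfmem, hf0⟩ := hcontra.2.1
    obtain ⟨j, hj, hjne, rfl⟩ := herase 0 hi f hfmem
    have hsj : 0 < s j := by
      have h1 : 0 < s 1 := hf.2.2.2.2.2.1 (by omega)
      rcases Nat.lt_or_ge 1 j with h | h
      · have := hf.sMono j hj 1 h; omega
      · have : j = 1 := by omega
        subst this; exact h1
    have htj : 0 < t j := lt_trans hsj (hf.2.2.1 j hj)
    simp only at hf0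
    omega
  · by_cases hiN : i = N - 1
    · subst hiN
      obtain ⟨f, hfmem, hfn⟩ := hcontra.2.2.1
      obtain ⟨j, hj, hjne, rfl⟩ := herase (N-1) hi f hfmem
      have htj : t j < n := by
        have := hf.tMono (N-1) (by omega) j (by omega)
        rw [hf.2.1] at this; exact this
      have hsj : s j < n := lt_trans (hf.2.2.1 j hj) htj
      simp only at hfn
      omega
    · -- interior edge: 0 < i < N-1
      have hiN' : i + 1 < N := by omega
      have hc1 : 0 < s (i+1) := by
        have := hf.sMono (i+1) hiN' 0 (by omega)
        rw [hf.1] at this; exact this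
      have hc2 : s (i+1) < n := by
        have h1 := hf.2.2.1 (i+1) hiN'
        have := hf.t_le_n (i+1) hiN'
        omega
      obtain ⟨f, hfmem, hfl, hfr⟩ := hcontra.2.2.2 (s (i+1)) hc1 hc2
      obtain ⟨j, hj, hjne, rfl⟩ := herase i hi f hfmem
      simp only at hfl hfr
      rcases Nat.lt_or_ge i j with h | h
      · -- j ≥ i+1 : s j ≥ s (i+1)
        have : s (i+1) ≤ s j := by
          rcases Nat.lt_or_ge (i+1) j with h2 | h2
          · exact (hf.sMono j hj (i+1) h2).le
          · have : j = i + 1 := by omega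
            subst this; exact le_refl _
        omega
      · -- j ≤ i-1 : t j ≤ t (i-1) ≤ s (i+1)
        have hji : j < i := by omega
        obtain ⟨i', rfl⟩ := Nat.exists_eq_succ_of_ne_zero hi0
        simp only [Nat.succ_eq_add_one] at hfl hfr
        have hE' : t i' ≤ s (i'+2) := hf.2.2.2.2.1 i' (by omega)
        have htj : t j ≤ t i' := by
          rcases Nat.lt_or_ge j i' with h2 | h2
          · exact (hf.tMono i' (by omega) j h2).le
          · have : j = i' := by omega
            subst this; exact le_refl _
        have e : s (i'+2) = s (i'+1+1) := congrArg s (by omega)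
        omega


/-! ### laces to families -/

lemma not_nested {n : ℕ} {L : Finset (ℕ × ℕ)} (hL : IsLaceOn 0 n L) {e e' : ℕ × ℕ}
    (he : e ∈ L) (he' : e' ∈ L) (hne : e ≠ e') (h1 : e.1 ≤ e'.1) (h2 : e'.2 ≤ e.2) :
    False := by
  apply hL.2 e' he'
  refine ⟨fun f hf => hL.1.1 f (Finset.mem_of_mem_erase hf), ?_, ?_, ?_⟩
  · obtain ⟨f, hfL, hf0⟩ := hL.1.2.1
    have hf0' : f.1 = 0 := by
      rcases hf0 with h | h
      · exact h
      · have := hL.1.1 f hfL; omega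
    by_cases hfe : f = e'
    · subst hfe
      exact ⟨e, Finset.mem_erase.mpr ⟨hne, he⟩, Or.inl (by omega)⟩
    · exact ⟨f, Finset.mem_erase.mpr ⟨hfe, hfL⟩, Or.inl hf0'⟩
  · obtain ⟨f, hfL, hfn⟩ := hL.1.2.2.1
    have hfn' : f.2 = n := by
      rcases hfn with h | h
      · have := hL.1.1 f hfL; omega
      · exact h
    by_cases hfe : f = e'
    · subst hfe
      have := hL.1.1 e he
      exact ⟨e, Finset.mem_erase.mpr ⟨hne, he⟩, Or.inr (by omega)⟩
    · exact ⟨f, Finset.mem_erase.mpr ⟨hfe, hfL⟩, Or.inr hfn'⟩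
  · intro c hc0 hcn
    obtain ⟨f, hfL, hfc⟩ := hL.1.2.2.2 c hc0 hcn
    by_cases hfe : f = e'
    · subst hfe
      exact ⟨e, Finset.mem_erase.mpr ⟨hne, he⟩, by omega, by omega⟩
    · exact ⟨f, Finset.mem_erase.mpr ⟨hfe, hfL⟩, hfc⟩

lemma lace_fst_ne {n : ℕ} {L : Finset (ℕ × ℕ)} (hL : IsLaceOn 0 n L) {e e' : ℕ × ℕ}
    (he : e ∈ L) (he' : e' ∈ L) (hne : e ≠ e') : e.1 ≠ e'.1 := by
  intro h
  rcases Nat.le_total e.2 e'.2 with h2 | h2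
  · exact not_nested hL he' he (Ne.symm hne) (le_of_eq h.symm) h2
  · exact not_nested hL he he' hne (le_of_eq h) h2

lemma lace_snd_lt {n : ℕ} {L : Finset (ℕ × ℕ)} (hL : IsLaceOn 0 n L) {e e' : ℕ × ℕ}
    (he : e ∈ L) (he' : e' ∈ L) (h : e.1 < e'.1) : e.2 < e'.2 := by
  have hne : e ≠ e' := by intro hh; subst hh; omega
  by_contra h2
  push_neg at h2
  exact not_nested hL he he' hne h.le h2

lemma fam_of_lace {N n : ℕ} {L : Finset (ℕ × ℕ)} (hN : 1 ≤ N) (hL : IsLaceOn 0 n L)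
    (hcard : L.card = N) :
    ∃ s t : ℕ → ℕ, Fam N n s t ∧ L = (range N).image (fun i => (s i, t i)) := by
  have hinj : Set.InjOn Prod.fst (L : Set (ℕ × ℕ)) := by
    intro e he e' he' h
    by_contra hne
    exact lace_fst_ne hL he he' hne h
  set K := L.image Prod.fst with hK
  have hKcard : K.card = N := by
    rw [hK, Finset.card_image_of_injOn hinj, hcard]
  have hchoose : ∀ i : Fin N, ∃ e, e ∈ L ∧ e.1 = (K.orderIsoOfFin hKcard i : ℕ) := by
    intro i
    have : (K.orderIsoOfFin hKcard i : ℕ) ∈ L.image Prod.fst := (K.orderIsoOfFin hKcard i).2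
    obtain ⟨e, heL, he⟩ := Finset.mem_image.mp this
    exact ⟨e, heL, he⟩
  choose E hEL hEfst using hchoose
  have hfstmono : ∀ i j : Fin N, i < j → (E i).1 < (E j).1 := by
    intro i j hij
    rw [hEfst i, hEfst j]
    exact Subtype.coe_lt_coe.mpr ((K.orderIsoOfFin hKcard).strictMono hij)
  have hsndmono : ∀ i j : Fin N, i < j → (E i).2 < (E j).2 := by
    intro i j hij
    exact lace_snd_lt hL (hEL i) (hEL j) (hfstmono i j hij)
  have hEsurj : ∀ f ∈ L, ∃ i : Fin N, E i = f := by
    intro f hfL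
    have hfK : f.1 ∈ K := Finset.mem_image_of_mem _ hfL
    set i := (K.orderIsoOfFin hKcard).symm ⟨f.1, hfK⟩ with hi
    have h1 : (E i).1 = f.1 := by
      rw [hEfst i, hi, OrderIso.apply_symm_apply]
    refine ⟨i, ?_⟩
    by_contra hne
    exact lace_fst_ne hL (hEL i) hfL hne h1
  set s : ℕ → ℕ := fun i => if h : i < N then (E ⟨i, h⟩).1 else 0 with hs_def
  set t : ℕ → ℕ := fun i => if h : i < N then (E ⟨i, h⟩).2 else 0 with ht_def
  have hsval : ∀ {i : ℕ} (h : i < N), s i = (E ⟨i, h⟩).1 := by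
    intro i h; rw [hs_def]; simp only [dif_pos h]
  have htval : ∀ {i : ℕ} (h : i < N), t i = (E ⟨i, h⟩).2 := by
    intro i h; rw [ht_def]; simp only [dif_pos h]
  have hst : ∀ i (h : i < N), (s i, t i) ∈ L := by
    intro i h
    rw [hsval h, htval h]
    exact hEL ⟨i, h⟩
  have hsmono : ∀ i j, i < j → j < N → s i < s j := by
    intro i j hij hj
    rw [hsval (lt_trans hij hj), hsval hj]
    exact hfstmono ⟨i, lt_trans hij hj⟩ ⟨j, hj⟩ hij
  have htmono : ∀ i j, i < j → j < N → t i < t j := by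
    intro i j hij hj
    rw [htval (lt_trans hij hj), htval hj]
    exact hsndmono ⟨i, lt_trans hij hj⟩ ⟨j, hj⟩ hij
  have hgraphE : ∀ i, i < N → s i < t i ∧ t i ≤ n := by
    intro i h
    have := hL.1.1 _ (hst i h)
    exact ⟨this.2.1, this.2.2⟩
  have hedge : ∀ f ∈ L, ∃ j, j < N ∧ f = (s j, t j) := by
    intro f hfL
    obtain ⟨k, rfl⟩ := hEsurj f hfL
    refine ⟨(k : ℕ), k.isLt, ?_⟩
    rw [hsval k.isLt, htval k.isLt]
  have hcover : ∀ c, 0 < c → c < n → ∃ j, j < N ∧ s j < c ∧ c < t j := by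
    intro c h1 h2
    obtain ⟨f, hfL, hc1, hc2⟩ := hL.1.2.2.2 c h1 h2
    obtain ⟨j, hj, rfl⟩ := hedge f hfL
    exact ⟨j, hj, hc1, hc2⟩
  have hzero : ∃ i, i < N ∧ s i = 0 := by
    obtain ⟨f, hfL, hf0⟩ := hL.1.2.1
    have hf0' : f.1 = 0 := by
      rcases hf0 with h | h
      · exact h
      · have := hL.1.1 f hfL; omega
    obtain ⟨j, hj, rfl⟩ := hedge f hfL
    exact ⟨j, hj, hf0'⟩
  have hlastn : ∃ i, i < N ∧ t i = n := by
    obtain ⟨f, hfL, hfn⟩ := hL.1.2.2.1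
    have hfn' : f.2 = n := by
      rcases hfn with h | h
      · have := hL.1.1 f hfL; omega
      · exact h
    obtain ⟨j, hj, rfl⟩ := hedge f hfL
    exact ⟨j, hj, hfn'⟩
  have hpairne : ∀ i j, i < N → j < N → i ≠ j → (s i, t i) ≠ (s j, t j) := by
    intro i j hi hj hij h
    have h1 : s i = s j := (Prod.mk.injEq _ _ _ _ ▸ h).1
    rcases Nat.lt_or_ge i j with hh | hh
    · have := hsmono i j hh hj; omega
    · have := hsmono j i (by omega) hi; omega
  have hA : s 0 = 0 := by
    obtain ⟨i, hi, h0⟩ := hzero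
    rcases Nat.eq_zero_or_pos i with h | h
    · rw [h] at h0; exact h0
    · have := hsmono 0 i h hi
      omega
  have hB : t (N-1) = n := by
    obtain ⟨i, hi, hn'⟩ := hlastn
    have h1 : t i ≤ t (N-1) := by
      rcases Nat.lt_or_ge i (N-1) with h | h
      · exact (htmono i (N-1) h (by omega)).le
      · have : i = N - 1 := by omega
        rw [this]
    have h2 := (hgraphE (N-1) (by omega)).2
    omega
  refine ⟨s, t, ⟨hA, hB, fun i h => (hgraphE i h).1, ?_, ?_, ?_, ?_⟩, ?_⟩
  · -- D
    intro i hi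
    by_contra h
    push_neg at h
    have hc0 : 0 < t i := by
      have := (hgraphE i (by omega)).1; omega
    have hcn : t i < n := by
      have h1 := (hgraphE (i+1) hi).1
      have h2 := (hgraphE (i+1) hi).2
      omega
    obtain ⟨j, hj, hc1, hc2⟩ := hcover (t i) hc0 hcn
    have hij : i < j := by
      rcases Nat.lt_or_ge i j with hh | hh
      · exact hh
      · rcases Nat.lt_or_ge j i with h2 | h2
        · have := htmono j i h2 (by omega); omega
        · have hji : j = i := by omega
          subst hji
          omega
    have : s (i+1) ≤ s j := by
      rcases Nat.lt_or_ge (i+1) j with hh | hh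
      · exact (hsmono (i+1) j hh hj).le
      · have : j = i + 1 := by omega
        rw [this]
    omega
  · -- E
    intro i hi
    by_contra h
    push_neg at h
    apply hL.2 _ (hst (i+1) (by omega))
    refine ⟨fun f hf => hL.1.1 f (Finset.mem_of_mem_erase hf), ?_, ?_, ?_⟩
    · obtain ⟨j, hj, h0⟩ := hzero
      have hjne : j ≠ i + 1 := by
        intro hh
        have := hsmono 0 (i+1) (by omega) (by omega)
        rw [← hh] at this
        omega
      exact ⟨(s j, t j), Finset.mem_erase.mpr ⟨hpairne j (i+1) hj (by omega) hjne, hst j hj⟩,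
        Or.inl h0⟩
    · obtain ⟨j, hj, hn'⟩ := hlastn
      have hjne : j ≠ i + 1 := by
        intro hh
        have h1 := htmono (i+1) (i+2) (by omega) hi
        have h2 := (hgraphE (i+2) hi).2
        rw [hh] at hn'
        omega
      exact ⟨(s j, t j), Finset.mem_erase.mpr ⟨hpairne j (i+1) hj (by omega) hjne, hst j hj⟩,
        Or.inr hn'⟩
    · intro c hc0 hcn
      obtain ⟨j, hj, hc1, hc2⟩ := hcover c hc0 hcn
      by_cases hje : j = i + 1
      · subst hje
        by_cases hct : c < t i
        · refine ⟨(s i, t i), Finset.mem_erase.mpr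
            ⟨hpairne i (i+1) (by omega) (by omega) (by omega), hst i (by omega)⟩, ?_, hct⟩
          have := hsmono i (i+1) (by omega) (by omega)
          simp only
          omega
        · push_neg at hct
          refine ⟨(s (i+2), t (i+2)), Finset.mem_erase.mpr
            ⟨hpairne (i+2) (i+1) hi (by omega) (by omega), hst (i+2) hi⟩, ?_, ?_⟩
          · simp only
            omega
          · have := htmono (i+1) (i+2) (by omega) hi
            simp only
            omega
      · exact ⟨(s j, t j), Finset.mem_erase.mpr ⟨hpairne j (i+1) hj (by omega) hje,
          hst j hj⟩, hc1, hc2⟩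
  · -- F
    intro h1N
    have := hsmono 0 1 (by omega) (by omega)
    omega
  · -- G
    intro h1N
    exact htmono (N-2) (N-1) (by omega) (by omega)
  · -- L = image
    apply Finset.ext
    intro f
    rw [mem_fam_image]
    constructor
    · intro hfL
      obtain ⟨j, hj, rfl⟩ := hedge f hfL
      exact ⟨j, hj, rfl⟩
    · rintro ⟨i, hi', rfl⟩
      exact hst i hi'


/-! ### families to sequences -/

def qFun (N : ℕ) (s t : ℕ → ℕ) : ℕ → ℕ := fun k =>
  if k = 0 then 0 else if k = 2*N-1 then t (N-1)
  else if k % 2 = 1 then s ((k+1)/2) else t (k/2 - 1)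

variable {N n : ℕ} {s t : ℕ → ℕ}

lemma qFun_zero : qFun N s t 0 = 0 := by simp [qFun]

lemma qFun_odd (hN : 1 ≤ N) {i : ℕ} (h1 : 1 ≤ i) (h2 : i ≤ N-1) :
    qFun N s t (2*i-1) = s i := by
  unfold qFun
  rw [if_neg (by omega), if_neg (by omega), if_pos (by omega)]
  congr 1
  omega

lemma qFun_even (hN : 1 ≤ N) {i : ℕ} (h1 : 1 ≤ i) (h2 : i ≤ N-1) :
    qFun N s t (2*i) = t (i-1) := by
  unfold qFun
  rw [if_neg (by omega), if_neg (by omega), if_neg (by omega)]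
  congr 1
  omega

lemma qFun_top (hN : 1 ≤ N) : qFun N s t (2*N-1) = t (N-1) := by
  unfold qFun
  rw [if_neg (by omega), if_pos rfl]

lemma qFun_step (hN : 1 ≤ N) (hf : Fam N n s t) :
    ∀ k, k + 1 ≤ 2*N-1 → qFun N s t k ≤ qFun N s t (k+1) := by
  intro k hk
  rcases Nat.eq_zero_or_pos k with h0 | h0
  · subst h0
    rw [qFun_zero]
    exact Nat.zero_le _
  · rcases Nat.even_or_odd k with ⟨a, ha⟩ | ⟨a, ha⟩
    · -- k = 2a, a ≥ 1
      have ha1 : 1 ≤ a := by omega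
      have e1 : qFun N s t k = t (a-1) := by
        rw [show k = 2*a from by omega]
        exact qFun_even hN ha1 (by omega)
      by_cases htop : k + 1 = 2*N-1
      · have e2 : qFun N s t (k+1) = t (N-1) := by rw [htop]; exact qFun_top hN
        have haN : a = N - 1 := by omega
        have hG : t (N-2) < t (N-1) := hf.2.2.2.2.2.2 (by omega)
        rw [e1, e2, show a - 1 = N-2 from by omega]
        exact hG.le
      · have e2 : qFun N s t (k+1) = s (a+1) := by
          rw [show k + 1 = 2*(a+1)-1 from by omega]
          exact qFun_odd hN (by omega) (by omega)
        have hE : t (a-1) ≤ s ((a-1)+2) := hf.2.2.2.2.1 (a-1) (by omega)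
        rw [e1, e2]
        rw [show (a-1)+2 = a+1 from by omega] at hE
        exact hE
    · -- k = 2a+1 odd
      have e1 : qFun N s t k = s (a+1) := by
        rw [show k = 2*(a+1)-1 from by omega]
        exact qFun_odd hN (by omega) (by omega)
      have e2 : qFun N s t (k+1) = t a := by
        rw [show k + 1 = 2*(a+1) from by omega]
        rw [qFun_even hN (by omega : 1 ≤ a+1) (by omega)]
        congr 1
      have hD : s (a+1) < t a := hf.2.2.2.1 a (by omega)
      rw [e1, e2]
      exact hD.le

lemma qFun_mono (hN : 1 ≤ N) (hf : Fam N n s t) :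
    ∀ k l, k ≤ l → l ≤ 2*N-1 → qFun N s t k ≤ qFun N s t l := by
  intro k l
  induction l with
  | zero => intro h1 h2; have : k = 0 := by omega
            rw [this]
  | succ l ih =>
    intro h1 h2
    rcases Nat.lt_or_ge k (l+1) with h | h
    · exact le_trans (ih (by omega) (by omega)) (qFun_step hN hf l h2)
    · have : k = l + 1 := by omega
      rw [this]

def mFun (N : ℕ) (s t : ℕ → ℕ) : Fin (2*N-1) → ℕ :=
  fun j => qFun N s t ((j : ℕ)+1) - qFun N s t (j : ℕ)

lemma partialSum_mFun (hN : 1 ≤ N) (hf : Fam N n s t) :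
    ∀ k, k ≤ 2*N-1 → partialSum (mFun N s t) k = qFun N s t k := by
  intro k
  induction k with
  | zero => intro _; rw [partialSum_zero, qFun_zero]
  | succ k ih =>
    intro hk
    rw [partialSum_succ, dif_pos (by omega : k < 2*N-1), ih (by omega)]
    have h1 : mFun N s t ⟨k, by omega⟩ = qFun N s t (k+1) - qFun N s t k := rfl
    have h2 := qFun_step hN hf k hk
    omega

lemma seq_of_fam (hN : 1 ≤ N) (hf : Fam N n s t) :
    ∃ m : Fin (2*N-1) → ℕ, SeqCond N n m ∧
      (∀ i, i < N → sFun N m i = s i ∧ tFun N m i = t i) := by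
  refine ⟨mFun N s t, ⟨?_, ?_, ?_, ?_⟩, ?_⟩
  · have h1 : partialSum (mFun N s t) (2*N-1) = n := by
      rw [partialSum_mFun hN hf _ le_rfl, qFun_top hN, hf.2.1]
    rw [← partialSum_all]
    exact h1
  · intro h
    have h1 : mFun N s t ⟨0, h⟩ = qFun N s t 1 - qFun N s t 0 := rfl
    rw [qFun_zero] at h1
    by_cases hN1 : N = 1
    · have e : qFun N s t 1 = t (N-1) := by
        have h2 := qFun_top (s := s) (t := t) hN
        rwa [show 2*N-1 = 1 from by omega] at h2
      have hC := hf.2.2.1 0 (by omega)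
      have hA := hf.1
      rw [show N - 1 = 0 from by omega] at e
      omega
    · have e : qFun N s t 1 = s 1 := by
        rw [show (1:ℕ) = 2*1-1 from by omega]
        exact qFun_odd hN (by omega) (by omega)
      have hF := hf.2.2.2.2.2.1 (by omega)
      omega
  · intro h
    have h1 : mFun N s t ⟨2*N-2, h⟩ = qFun N s t (2*N-2+1) - qFun N s t (2*N-2) := rfl
    by_cases hN1 : N = 1
    · have e0 : qFun N s t (2*N-2) = 0 := by
        rw [show 2*N-2 = 0 from by omega]
        exact qFun_zero
      have e1 : qFun N s t (2*N-2+1) = t (N-1) := by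
        rw [show 2*N-2+1 = 2*N-1 from by omega]
        exact qFun_top hN
      have hC := hf.2.2.1 0 (by omega)
      have hA := hf.1
      rw [show N-1 = 0 from by omega] at e1
      omega
    · have e2 : qFun N s t (2*N-2+1) = t (N-1) := by
        rw [show 2*N-2+1 = 2*N-1 from by omega]
        exact qFun_top hN
      have e3 : qFun N s t (2*N-2) = t (N-2) := by
        rw [show 2*N-2 = 2*(N-1) from by omega]
        rw [qFun_even hN (by omega : 1 ≤ N-1) (by omega)]
        congr 1
      have hG := hf.2.2.2.2.2.2 (by omega)
      omega
  · intro j hj1 hj2 h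
    have h1 : mFun N s t ⟨2*j-1, h⟩ = qFun N s t (2*j-1+1) - qFun N s t (2*j-1) := rfl
    have e1 : qFun N s t (2*j-1) = s j := qFun_odd hN hj1 hj2
    have e2 : qFun N s t (2*j-1+1) = t (j-1) := by
      rw [show 2*j-1+1 = 2*j from by omega]
      exact qFun_even hN hj1 hj2
    have hD : s ((j-1)+1) < t (j-1) := hf.2.2.2.1 (j-1) (by omega)
    rw [show (j-1)+1 = j from by omega] at hD
    omega
  · intro i hi
    constructor
    · rw [sFun]
      by_cases h0 : i = 0
      · rw [if_pos h0, h0, hf.1]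
      · rw [if_neg h0, partialSum_mFun hN hf _ (by omega)]
        exact qFun_odd hN (by omega) (by omega)
    · rw [tFun]
      by_cases hlast : i = N - 1
      · rw [if_pos hlast, partialSum_mFun hN hf _ le_rfl, hlast]
        exact qFun_top hN
      · rw [if_neg hlast, partialSum_mFun hN hf _ (by omega)]
        rw [show 2*i+2 = 2*(i+1) from by omega]
        rw [qFun_even hN (by omega : 1 ≤ i+1) (by omega)]
        congr 1

/-! ### uniqueness -/

lemma fam_unique (hN : 1 ≤ N) {s' t' : ℕ → ℕ} (hf : Fam N n s t) (hf' : Fam N n s' t')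
    (h : (range N).image (fun i => (s i, t i)) = (range N).image (fun i => (s' i, t' i))) :
    ∀ i, i < N → s i = s' i ∧ t i = t' i := by
  have himg : (range N).image (fun i => s i) = (range N).image (fun i => s' i) := by
    have e1 : ((range N).image (fun i => (s i, t i))).image Prod.fst
        = (range N).image (fun i => s i) := by
      rw [Finset.image_image]
      exact Finset.image_congr (fun x _ => rfl)
    have e2 : ((range N).image (fun i => (s' i, t' i))).image Prod.fst
        = (range N).image (fun i => s' i) := by
      rw [Finset.image_image]
      exact Finset.image_congr (fun x _ => rfl)
    rw [← e1, ← e2, h]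
  set A := (range N).image (fun i => s i) with hA
  have hcardA : A.card = N := by
    rw [hA, Finset.card_image_of_injOn, Finset.card_range]
    intro x hx y hy hxy
    have hxy' : s x = s y := hxy
    by_contra hne
    rcases Nat.lt_or_ge x y with hlt | hge
    · have := hf.sMono y (Finset.mem_range.mp hy) x hlt; omega
    · have := hf.sMono x (Finset.mem_range.mp hx) y (by omega); omega
  have hmono : StrictMono (fun i : Fin N => s (i : ℕ)) := by
    intro i j hij
    exact hf.sMono (j : ℕ) j.isLt (i : ℕ) hij
  have hmono' : StrictMono (fun i : Fin N => s' (i : ℕ)) := by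
    intro i j hij
    exact hf'.sMono (j : ℕ) j.isLt (i : ℕ) hij
  have hmem : ∀ i : Fin N, s (i : ℕ) ∈ A :=
    fun i => Finset.mem_image.mpr ⟨(i : ℕ), Finset.mem_range.mpr i.isLt, rfl⟩
  have hmem' : ∀ i : Fin N, s' (i : ℕ) ∈ A := by
    intro i
    rw [himg]
    exact Finset.mem_image.mpr ⟨(i : ℕ), Finset.mem_range.mpr i.isLt, rfl⟩
  have hu := Finset.orderEmbOfFin_unique hcardA hmem hmono
  have hu' := Finset.orderEmbOfFin_unique hcardA hmem' hmono'
  have hss : ∀ i : Fin N, s (i : ℕ) = s' (i : ℕ) := by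
    intro i
    have e1 : s (i : ℕ) = A.orderEmbOfFin hcardA i := congrFun hu i
    have e2 : s' (i : ℕ) = A.orderEmbOfFin hcardA i := congrFun hu' i
    rw [e1, e2]
  intro i hi
  have hs_eq : s i = s' i := hss ⟨i, hi⟩
  refine ⟨hs_eq, ?_⟩
  have hmemi : (s i, t i) ∈ (range N).image (fun i => (s' i, t' i)) := by
    rw [← h]
    exact Finset.mem_image.mpr ⟨i, Finset.mem_range.mpr hi, rfl⟩
  obtain ⟨j, hj, hje⟩ := Finset.mem_image.mp hmemi
  have hj' := Finset.mem_range.mp hj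
  have h1 : s' j = s i := (Prod.mk.injEq _ _ _ _ ▸ hje).1
  have h2 : t' j = t i := (Prod.mk.injEq _ _ _ _ ▸ hje).2
  have hij : j = i := by
    by_contra hne
    rcases Nat.lt_or_ge j i with hlt | hge
    · have := hf'.sMono i hi j hlt; omega
    · have := hf'.sMono j hj' i (by omega); omega
  rw [← h2, hij]

lemma seq_unique (hN : 1 ≤ N) {m m' : Fin (2*N-1) → ℕ}
    (hm : SeqCond N n m) (hm' : SeqCond N n m')
    (h : ∀ i, i < N → sFun N m i = sFun N m' i ∧ tFun N m i = tFun N m' i) :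
    m = m' := by
  have hPS : ∀ k, k ≤ 2*N-1 → partialSum m k = partialSum m' k := by
    intro k hk
    rcases Nat.eq_zero_or_pos k with h0 | h0
    · subst h0; rw [partialSum_zero, partialSum_zero]
    · by_cases htop : k = 2*N-1
      · have := (h (N-1) (by omega)).2
        rw [tFun, tFun, if_pos rfl, if_pos rfl] at this
        rw [htop]
        exact this
      · rcases Nat.even_or_odd k with ⟨a, ha⟩ | ⟨a, ha⟩
        · -- k = 2a = 2(a-1)+2, use tFun at a-1
          have haN : a - 1 < N ∧ a - 1 ≠ N - 1 := by omega
          have := (h (a-1) haN.1).2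
          rw [tFun, tFun, if_neg haN.2, if_neg haN.2] at this
          rw [show k = 2*(a-1)+2 from by omega]
          exact this
        · -- k = 2a+1 = 2(a+1)-1, use sFun at a+1
          have haN : a + 1 < N ∧ a + 1 ≠ 0 := by omega
          have := (h (a+1) haN.1).1
          rw [sFun, sFun, if_neg haN.2, if_neg haN.2] at this
          rw [show k = 2*(a+1)-1 from by omega]
          exact this
  funext j
  have h1 : partialSum m ((j:ℕ)+1) = partialSum m (j:ℕ) + m j := by
    rw [partialSum_succ, dif_pos j.isLt, Fin.eta]
  have h2 : partialSum m' ((j:ℕ)+1) = partialSum m' (j:ℕ) + m' j := by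
    rw [partialSum_succ, dif_pos j.isLt, Fin.eta]
  have h3 := hPS (j:ℕ) (by omega)
  have h4 := hPS ((j:ℕ)+1) (by omega)
  omega

end LaceAux

/-- an `N`-edge lace on `[0,n]` is completely determined by its
sequence of interval lengths: the canonical map `m ↦ laceFromSeq N m` is a
bijection from admissible length sequences onto `N`-edge laces on `[0,n]`. -/
theorem lace_seq_bijection (N n : ℕ) (hN : 1 ≤ N) (hn : 1 ≤ n) :
    ∃ F : {m : Fin (2 * N - 1) → ℕ // SeqCond N n m} →
          {L : Finset (ℕ × ℕ) // IsLaceOn 0 n L ∧ L.card = N},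
      (∀ m, (F m).1 = laceFromSeq N m.1) ∧ Function.Bijective F := by
  have hwd : ∀ (m : {m : Fin (2*N-1) → ℕ // SeqCond N n m}),
      IsLaceOn 0 n (laceFromSeq N m.1) ∧ (laceFromSeq N m.1).card = N := by
    intro m
    rw [LaceAux.laceFromSeq_eq]
    exact LaceAux.lace_of_fam hN (LaceAux.fam_of_seq hN m.2)
  refine ⟨fun m => ⟨laceFromSeq N m.1, hwd m⟩, fun m => rfl, ?_, ?_⟩
  · intro x y hxy
    have h : laceFromSeq N x.1 = laceFromSeq N y.1 := congrArg Subtype.val hxy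
    rw [LaceAux.laceFromSeq_eq, LaceAux.laceFromSeq_eq] at h
    have hfx := LaceAux.fam_of_seq hN x.2
    have hfy := LaceAux.fam_of_seq hN y.2
    have huniq := LaceAux.fam_unique hN hfx hfy h
    apply Subtype.ext
    exact LaceAux.seq_unique hN x.2 y.2 (fun i hi => huniq i hi)
  · rintro ⟨L, hl, hc⟩
    obtain ⟨s, t, hf, hLeq⟩ := LaceAux.fam_of_lace hN hl hc
    obtain ⟨m, hm, hrec⟩ := LaceAux.seq_of_fam hN hf
    refine ⟨⟨m, hm⟩, ?_⟩
    apply Subtype.ext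
    show laceFromSeq N m = L
    rw [LaceAux.laceFromSeq_eq, hLeq]
    apply Finset.image_congr
    intro i hi
    have hi' : i < N := by simpa using hi
    have := hrec i hi'
    show (LaceAux.sFun N m i, LaceAux.tFun N m i) = (s i, t i)
    rw [this.1, this.2]
end

section
/- Assume d ≥ 5 and let μ > 0, K > 0. Suppose a_m ≤ K β μ^m m^{-d/2} and b_m ≤ K μ^m for all 1 ≤ m < n, with β > 0. Then the 'diagrammatic' sum Σ_{N≥2} (2N-1) 2^{N-1} (1+2dκ)^N Σ_{m} Π_{j odd} a_{m_j} Π_{j even} b_{m_j}, where the inner sum is over m_1 + ... + m_{2N-1} = n with m_1 the largest and m_{2j} ≤ m_{2j+1}, is at most K' β² μ^n n^{-d/2} for β small enough (depending only on d, κ, K), where K' depends only on d, κ, K. In particular, the inner sum for fixed N is bounded by K^{2N-1}(2N-1)^{d/2} β^N μ^n n^{-d/2} (Σ_{m≥1} m^{-d/2+1})^{N-1}. -/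
attribute [local instance] Classical.propDecidable

noncomputable section

/-- The inner diagrammatic sum: over `m = (m_1, …, m_{2N-1})` (here `0`-indexed,
with values in `{0, …, n}`) such that `m_1 + ⋯ + m_{2N-1} = n`, `m_1 ≥ 1` is the
largest part, and `1 ≤ m_{2j} ≤ m_{2j+1}` for `1 ≤ j ≤ N-1` (paper indexing;
`0`-based, odd indices `i` satisfy `1 ≤ m i ≤ m (i+1)`), of the product of
`a (m_j)` over paper-odd indices (`0`-based even) and `b (m_j)` over paper-even
indices (`0`-based odd). -/
def innerDiagSum (a b : ℕ → ℝ) (N n : ℕ) : ℝ :=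
  ∑ m : Fin (2 * N - 1) → Fin (n + 1),
    if ((∑ j, (m j : ℕ)) = n ∧
        (∀ h : 0 < 2 * N - 1, ∀ j, (m j : ℕ) ≤ (m ⟨0, h⟩ : ℕ)) ∧
        (∀ h : 0 < 2 * N - 1, 1 ≤ (m ⟨0, h⟩ : ℕ)) ∧
        (∀ i : Fin (2 * N - 1), i.1 % 2 = 1 →
          1 ≤ (m i : ℕ) ∧ ∀ h : i.1 + 1 < 2 * N - 1, (m i : ℕ) ≤ (m ⟨i.1 + 1, h⟩ : ℕ)))
    then (∏ j ∈ Finset.univ.filter (fun j : Fin (2 * N - 1) => j.1 % 2 = 0), a (m j)) *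
         (∏ j ∈ Finset.univ.filter (fun j : Fin (2 * N - 1) => j.1 % 2 = 1), b (m j))
    else 0

open Finset


lemma S_summable (d : ℕ) (hd : 5 ≤ d) :
    Summable (fun m : ℕ => ((m : ℝ) + 1) ^ (-(d : ℝ) / 2 + 1)) := by
  have hd' : (5 : ℝ) ≤ d := by exact_mod_cast hd
  have h1 : (fun m : ℕ => ((m : ℝ) + 1) ^ (-(d : ℝ) / 2 + 1))
      = (fun m : ℕ => ((m + 1 : ℕ) : ℝ) ^ (-(d : ℝ) / 2 + 1)) := by
    funext m; push_cast; ring_nf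
  rw [h1]
  have := (summable_nat_add_iff (f := fun m : ℕ => (m : ℝ) ^ (-(d : ℝ) / 2 + 1)) 1)
  rw [this, Real.summable_nat_rpow]
  linarith

lemma S_ge_one (d : ℕ) (hd : 5 ≤ d) :
    1 ≤ ∑' m : ℕ, ((m : ℝ) + 1) ^ (-(d : ℝ) / 2 + 1) := by
  have h := Summable.le_tsum (S_summable d hd) 0 (fun i _ => by positivity)
  simpa using h

lemma card_evens (N : ℕ) (hN : 1 ≤ N) :
    (Finset.univ.filter (fun j : Fin (2 * N - 1) => j.1 % 2 = 0)).card = N := by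
  have key : (Finset.univ.filter (fun j : Fin (2 * N - 1) => j.1 % 2 = 0)).card
      = (Finset.univ : Finset (Fin N)).card := by
    refine Finset.card_bij'
        (fun j hj => (⟨j.1 / 2, by have := j.2; omega⟩ : Fin N))
        (fun k _ => (⟨2 * k.1, by have := k.2; omega⟩ : Fin (2 * N - 1))) ?_ ?_ ?_ ?_
    · intro a ha; simp
    · intro a ha; simp [Finset.mem_filter]; try omega
    · intro a ha; simp only [Finset.mem_filter, Finset.mem_univ, true_and] at ha
      apply Fin.ext; simp; try omega
    · intro a ha; apply Fin.ext; simp; try omega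
  simpa using key

lemma card_odds (N : ℕ) (hN : 1 ≤ N) :
    (Finset.univ.filter (fun j : Fin (2 * N - 1) => j.1 % 2 = 1)).card = N - 1 := by
  have key : (Finset.univ.filter (fun j : Fin (2 * N - 1) => j.1 % 2 = 1)).card
      = (Finset.univ : Finset (Fin (N - 1))).card := by
    refine Finset.card_bij'
        (fun j hj => (⟨j.1 / 2, by
          have := j.2; simp only [Finset.mem_filter, Finset.mem_univ, true_and] at hj
          omega⟩ : Fin (N - 1)))
        (fun k _ => (⟨2 * k.1 + 1, by have := k.2; omega⟩ : Fin (2 * N - 1))) ?_ ?_ ?_ ?_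
    · intro a ha; simp
    · intro a ha; simp [Finset.mem_filter]; try omega
    · intro a ha; simp only [Finset.mem_filter, Finset.mem_univ, true_and] at ha
      apply Fin.ext; simp; try omega
    · intro a ha; apply Fin.ext; simp; try omega
  simpa using key

lemma pair_card (n : ℕ) (y : Fin (n + 1)) :
    (Finset.univ.filter (fun x : Fin (n + 1) => 1 ≤ (x : ℕ) ∧ (x : ℕ) ≤ (y : ℕ))).card
      = (y : ℕ) := by
  have key : (Finset.univ.filter (fun x : Fin (n + 1) => 1 ≤ (x : ℕ) ∧ (x : ℕ) ≤ (y : ℕ))).card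
      = (Finset.range (y : ℕ)).card := by
    refine Finset.card_bij'
        (fun x hx => x.1 - 1)
        (fun k hk => (⟨k + 1, by simp only [Finset.mem_range] at hk; have := y.2; omega⟩ :
          Fin (n + 1))) ?_ ?_ ?_ ?_
    · intro x hx; simp only [Finset.mem_filter, Finset.mem_univ, true_and] at hx
      simp only [Finset.mem_range]; omega
    · intro k hk; simp only [Finset.mem_range] at hk
      simp only [Finset.mem_filter, Finset.mem_univ, true_and]; simp; omega
    · intro x hx; simp only [Finset.mem_filter, Finset.mem_univ, true_and] at hx
      apply Fin.ext; simp; omega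
    · intro k hk; simp only [Finset.mem_range] at hk; simp
  rw [key, Finset.card_range]

lemma pairSum_le (d : ℕ) (hd : 5 ≤ d) (n : ℕ) :
    (∑ x : Fin (n + 1) × Fin (n + 1),
        if 1 ≤ (x.1 : ℕ) ∧ (x.1 : ℕ) ≤ (x.2 : ℕ) then ((x.2 : ℕ) : ℝ) ^ (-(d : ℝ) / 2) else 0)
      ≤ ∑' m : ℕ, ((m : ℝ) + 1) ^ (-(d : ℝ) / 2 + 1) := by
  rw [Fintype.sum_prod_type_right]
  have inner_eq : ∀ y : Fin (n + 1),
      (∑ x : Fin (n + 1),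
        if 1 ≤ (x : ℕ) ∧ (x : ℕ) ≤ (y : ℕ) then ((y : ℕ) : ℝ) ^ (-(d : ℝ) / 2) else 0)
      = ((y : ℕ) : ℝ) * ((y : ℕ) : ℝ) ^ (-(d : ℝ) / 2) := by
    intro y
    rw [Finset.sum_ite, Finset.sum_const, Finset.sum_const_zero, add_zero, pair_card n y,
      nsmul_eq_mul]
  rw [Finset.sum_congr rfl (fun y _ => inner_eq y)]
  rw [Fin.sum_univ_eq_sum_range (fun y : ℕ => (y : ℝ) * (y : ℝ) ^ (-(d : ℝ) / 2)) (n + 1)]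
  rw [Finset.sum_range_succ']
  have term_eq : ∀ i : ℕ,
      ((i + 1 : ℕ) : ℝ) * ((i + 1 : ℕ) : ℝ) ^ (-(d : ℝ) / 2) = ((i : ℝ) + 1) ^ (-(d : ℝ) / 2 + 1) := by
    intro i
    have h : (0 : ℝ) < (i : ℝ) + 1 := by positivity
    rw [Real.rpow_add h, Real.rpow_one]; push_cast; ring
  rw [Finset.sum_congr rfl (fun i _ => term_eq i)]
  simp only [Nat.cast_zero, zero_mul, add_zero]
  exact Summable.sum_le_tsum (Finset.range n) (fun i _ => by positivity) (S_summable d hd)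



def diagCond (N n : ℕ) (m : Fin (2 * N - 1) → Fin (n + 1)) : Prop :=
  (∑ j, (m j : ℕ)) = n ∧
    (∀ h : 0 < 2 * N - 1, ∀ j, (m j : ℕ) ≤ (m ⟨0, h⟩ : ℕ)) ∧
    (∀ h : 0 < 2 * N - 1, 1 ≤ (m ⟨0, h⟩ : ℕ)) ∧
    (∀ i : Fin (2 * N - 1), i.1 % 2 = 1 →
      1 ≤ (m i : ℕ) ∧ ∀ h : i.1 + 1 < 2 * N - 1, (m i : ℕ) ≤ (m ⟨i.1 + 1, h⟩ : ℕ))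

set_option maxHeartbeats 1000000 in
lemma inner_bound (d : ℕ) (hd : 5 ≤ d) (K : ℝ) (hK : 0 < K) (μ β : ℝ) (hμ : 0 < μ)
    (hβ : 0 < β) (n : ℕ) (a b : ℕ → ℝ) (ha0 : ∀ m, 0 ≤ a m) (hb0 : ∀ m, 0 ≤ b m)
    (ha : ∀ m : ℕ, 1 ≤ m → m < n → a m ≤ K * β * μ ^ m * (m : ℝ) ^ (-(d : ℝ) / 2))
    (hb : ∀ m : ℕ, 1 ≤ m → m < n → b m ≤ K * μ ^ m) (N : ℕ) (hN : 2 ≤ N) :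
    innerDiagSum a b N n ≤
      K ^ (2 * N - 1) * ((2 * (N : ℝ) - 1)) ^ ((d : ℝ) / 2) * β ^ N * μ ^ n *
        (n : ℝ) ^ (-(d : ℝ) / 2) *
        (∑' m : ℕ, ((m : ℝ) + 1) ^ (-(d : ℝ) / 2 + 1)) ^ (N - 1) := by
  classical
  have hN1R : (1 : ℝ) ≤ (N : ℝ) := by exact_mod_cast (by omega : 1 ≤ N)
  have h2N1 : (0 : ℝ) < 2 * (N : ℝ) - 1 := by linarith
  have hdR : (5 : ℝ) ≤ (d : ℝ) := by exact_mod_cast hd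
  set S := ∑' m : ℕ, ((m : ℝ) + 1) ^ (-(d : ℝ) / 2 + 1) with hS
  set g : ℕ → ℝ := fun y => (y : ℝ) ^ (-(d : ℝ) / 2) with hg
  have hg0 : ∀ y : ℕ, 0 ≤ g y := fun y => Real.rpow_nonneg (Nat.cast_nonneg y) _
  set C : ℝ := K ^ (2 * N - 1) * ((2 * (N : ℝ) - 1)) ^ ((d : ℝ) / 2) * β ^ N * μ ^ n *
        (n : ℝ) ^ (-(d : ℝ) / 2) with hC
  have hC0 : 0 ≤ C := by
    have h1 : (0:ℝ) ≤ (2 * (N : ℝ) - 1) ^ ((d : ℝ) / 2) := Real.rpow_nonneg h2N1.le _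
    have h2 : (0:ℝ) ≤ (n : ℝ) ^ (-(d : ℝ) / 2) := Real.rpow_nonneg (Nat.cast_nonneg n) _
    have hK' := hK.le; have hβ' := hβ.le; have hμ' := hμ.le
    positivity
  set G : (Fin (N - 1) → Fin (n + 1) × Fin (n + 1)) → ℝ :=
    fun p => ∏ k : Fin (N - 1), g ((p k).2 : ℕ) with hG
  have hG0 : ∀ p, 0 ≤ G p := fun p => Finset.prod_nonneg (fun k _ => hg0 _)
  set Φ : (Fin (2 * N - 1) → Fin (n + 1)) → (Fin (N - 1) → Fin (n + 1) × Fin (n + 1)) :=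
    fun m k => (m ⟨2 * k.1 + 1, by have := k.2; omega⟩, m ⟨2 * k.1 + 2, by have := k.2; omega⟩)
    with hΦ
  -- step 1 : termwise bound
  have step1 : innerDiagSum a b N n ≤
      ∑ m : Fin (2 * N - 1) → Fin (n + 1), (if diagCond N n m then C * G (Φ m) else 0) := by
    have hrep : innerDiagSum a b N n = ∑ m : Fin (2 * N - 1) → Fin (n + 1),
        (if diagCond N n m then
          (∏ j ∈ Finset.univ.filter (fun j : Fin (2 * N - 1) => j.1 % 2 = 0), a (m j)) *
          (∏ j ∈ Finset.univ.filter (fun j : Fin (2 * N - 1) => j.1 % 2 = 1), b (m j))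
        else 0) := by
      simp only [innerDiagSum, diagCond]
      apply Finset.sum_congr rfl
      intro x _
      congr 1
    rw [hrep]
    apply Finset.sum_le_sum
    intro m _
    split_ifs with hm
    · obtain ⟨hsum, hmax, h01, hodd⟩ := hm
      have hL : 0 < 2 * N - 1 := by omega
      set i0 : Fin (2 * N - 1) := ⟨0, hL⟩ with hi0
      set i1 : Fin (2 * N - 1) := ⟨1, by omega⟩ with hi1
      set i2 : Fin (2 * N - 1) := ⟨2, by omega⟩ with hi2
      have hmax' : ∀ j, (m j : ℕ) ≤ (m i0 : ℕ) := hmax hL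
      have hall1 : ∀ j : Fin (2 * N - 1), 1 ≤ (m j : ℕ) := by
        intro j
        by_cases hj1 : j.1 % 2 = 1
        · exact (hodd j hj1).1
        · by_cases hj0 : j.1 = 0
          · have : j = i0 := Fin.ext hj0
            rw [this]; exact h01 hL
          · have hjb := j.2
            set i : Fin (2 * N - 1) := ⟨j.1 - 1, by omega⟩ with hi
            have hi1' : i.1 % 2 = 1 := by simp [hi]; omega
            have h := hodd i hi1'
            have h2 := h.2 (by simp [hi]; omega)
            have hij : (⟨i.1 + 1, by simp [hi]; omega⟩ : Fin (2 * N - 1)) = j := by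
              apply Fin.ext; simp [hi]; omega
            rw [hij] at h2
            exact le_trans h.1 h2
      have hsum3 : (m i0 : ℕ) + (m i1 : ℕ) + (m i2 : ℕ) ≤ n := by
        have h01' : i0 ≠ i1 := by simp [hi0, hi1, Fin.ext_iff]
        have h02 : i0 ≠ i2 := by simp [hi0, hi2, Fin.ext_iff]
        have h12 : i1 ≠ i2 := by simp [hi1, hi2, Fin.ext_iff]
        have hss := Finset.sum_le_sum_of_subset
          (Finset.subset_univ ({i0, i1, i2} : Finset (Fin (2 * N - 1))))
          (f := fun j => (m j : ℕ))
        rw [Finset.sum_insert (by simp [h01', h02]), Finset.sum_insert (by simp [h12]),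
          Finset.sum_singleton] at hss
        have h' : (m i0 : ℕ) + ((m i1 : ℕ) + (m i2 : ℕ)) ≤ ∑ j, (m j : ℕ) := by
          simpa using hss
        omega
      have hm0lt : (m i0 : ℕ) < n := by
        have := hall1 i1; have := hall1 i2; omega
      have hjlt : ∀ j, (m j : ℕ) < n := fun j => lt_of_le_of_lt (hmax' j) hm0lt
      have hm0n : n ≤ (2 * N - 1) * (m i0 : ℕ) := by
        have h := Finset.sum_le_card_nsmul Finset.univ (fun j => (m j : ℕ)) (m i0 : ℕ)
          (fun j _ => hmax' j)
        have h2 : ∑ j, (m j : ℕ) ≤ (2 * N - 1) * (m i0 : ℕ) := by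
          simpa [Finset.card_univ, mul_comm] using h
        omega
      have hgm0 : g (m i0 : ℕ) ≤ (2 * (N : ℝ) - 1) ^ ((d : ℝ) / 2) * (n : ℝ) ^ (-(d : ℝ) / 2) := by
        have hn0 : (0 : ℝ) ≤ (n : ℝ) := Nat.cast_nonneg n
        have hq : (0 : ℝ) < (n : ℝ) / (2 * (N : ℝ) - 1) := by
          apply div_pos _ h2N1
          exact_mod_cast Nat.cast_pos.mpr (by omega : 0 < n)
        have hle : (n : ℝ) / (2 * (N : ℝ) - 1) ≤ ((m i0 : ℕ) : ℝ) := by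
          rw [div_le_iff₀ h2N1]
          have hcast : ((2 * N - 1 : ℕ) : ℝ) = 2 * (N : ℝ) - 1 := by
            push_cast [Nat.cast_sub (by omega : 1 ≤ 2 * N)]; ring
          calc (n : ℝ) ≤ ((2 * N - 1 : ℕ) : ℝ) * ((m i0 : ℕ) : ℝ) := by exact_mod_cast hm0n
            _ = ((m i0 : ℕ) : ℝ) * (2 * (N : ℝ) - 1) := by rw [hcast]; ring
        have h1 : g (m i0 : ℕ) ≤ ((n : ℝ) / (2 * (N : ℝ) - 1)) ^ (-(d : ℝ) / 2) :=
          Real.rpow_le_rpow_of_nonpos hq hle (by linarith)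
        have h2 : ((n : ℝ) / (2 * (N : ℝ) - 1)) ^ (-(d : ℝ) / 2)
            = (2 * (N : ℝ) - 1) ^ ((d : ℝ) / 2) * (n : ℝ) ^ (-(d : ℝ) / 2) := by
          rw [neg_div, Real.rpow_neg (div_nonneg hn0 h2N1.le), Real.div_rpow hn0 h2N1.le,
            inv_div, Real.rpow_neg hn0, div_eq_mul_inv]
        rw [h2] at h1; exact h1
      -- the product bound
      set evens := Finset.univ.filter (fun j : Fin (2 * N - 1) => j.1 % 2 = 0) with hevens
      set odds := Finset.univ.filter (fun j : Fin (2 * N - 1) => j.1 % 2 = 1) with hodds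
      have hA : ∏ j ∈ evens, a (m j : ℕ) ≤ ∏ j ∈ evens, (K * β * μ ^ (m j : ℕ) * g (m j : ℕ)) :=
        Finset.prod_le_prod (fun j _ => ha0 _) (fun j _ => ha _ (hall1 j) (hjlt j))
      have hB : ∏ j ∈ odds, b (m j : ℕ) ≤ ∏ j ∈ odds, (K * μ ^ (m j : ℕ)) :=
        Finset.prod_le_prod (fun j _ => hb0 _) (fun j _ => hb _ (hall1 j) (hjlt j))
      have hBnn : 0 ≤ ∏ j ∈ odds, b (m j : ℕ) := Finset.prod_nonneg fun j _ => hb0 _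
      have hAnn : 0 ≤ ∏ j ∈ evens, (K * β * μ ^ (m j : ℕ) * g (m j : ℕ)) :=
        Finset.prod_nonneg fun j _ => mul_nonneg (by positivity) (hg0 _)
      have e1 : ∏ j ∈ evens, (K * β * μ ^ (m j : ℕ) * g (m j : ℕ))
          = (K * β) ^ N * (∏ j ∈ evens, μ ^ (m j : ℕ)) * ∏ j ∈ evens, g (m j : ℕ) := by
        rw [Finset.prod_mul_distrib, Finset.prod_mul_distrib, Finset.prod_const]
        rw [hevens, card_evens N (by omega)]
      have e2 : ∏ j ∈ odds, (K * μ ^ (m j : ℕ)) = K ^ (N - 1) * ∏ j ∈ odds, μ ^ (m j : ℕ) := by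
        rw [Finset.prod_mul_distrib, Finset.prod_const]
        rw [hodds, card_odds N (by omega)]
      have e3 : (∏ j ∈ evens, μ ^ (m j : ℕ)) * (∏ j ∈ odds, μ ^ (m j : ℕ)) = μ ^ n := by
        have hOdds : odds = Finset.univ.filter (fun j : Fin (2 * N - 1) => ¬ (j.1 % 2 = 0)) := by
          rw [hodds]; apply Finset.filter_congr; intro j _; simp; try omega
        rw [hOdds, hevens, Finset.prod_filter_mul_prod_filter_not, Finset.prod_pow_eq_pow_sum,
          hsum]
      have e4 : ∏ j ∈ evens, g (m j : ℕ) = g (m i0 : ℕ) * G (Φ m) := by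
        have h0mem : i0 ∈ evens := by simp [hevens, hi0]
        rw [← Finset.mul_prod_erase evens _ h0mem]
        congr 1
        simp only [hG, hΦ]
        refine Finset.prod_bij'
            (fun j hj => (⟨(j.1 - 2) / 2, by
              simp only [hevens, Finset.mem_erase, Finset.mem_filter, Finset.mem_univ, true_and,
                Ne, Fin.ext_iff, hi0] at hj
              have := j.2; omega⟩ : Fin (N - 1)))
            (fun k hk => (⟨2 * k.1 + 2, by have := k.2; omega⟩ : Fin (2 * N - 1))) ?_ ?_ ?_ ?_ ?_
        · intro j hj; exact Finset.mem_univ _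
        · intro k hk
          simp only [hevens, Finset.mem_erase, Finset.mem_filter, Finset.mem_univ, true_and,
            Ne, Fin.ext_iff, hi0]
          simp; try omega
        · intro j hj
          simp only [hevens, Finset.mem_erase, Finset.mem_filter, Finset.mem_univ, true_and,
            Ne, Fin.ext_iff, hi0] at hj
          apply Fin.ext; simp; try omega
        · intro k hk; apply Fin.ext; simp; try omega
        · intro j hj
          simp only [hevens, Finset.mem_erase, Finset.mem_filter, Finset.mem_univ, true_and,
            Ne, Fin.ext_iff, hi0] at hj
          have hjv : (⟨2 * ((j.1 - 2) / 2) + 2, by have := j.2; omega⟩ : Fin (2 * N - 1)) = j := by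
            apply Fin.ext; simp; omega
          rw [hjv]
      have hKpow : (K * β) ^ N * K ^ (N - 1) = K ^ (2 * N - 1) * β ^ N := by
        rw [mul_pow, mul_right_comm, ← pow_add]
        congr 2
        omega
      calc (∏ j ∈ evens, a (m j : ℕ)) * (∏ j ∈ odds, b (m j : ℕ))
          ≤ (∏ j ∈ evens, (K * β * μ ^ (m j : ℕ) * g (m j : ℕ))) *
            (∏ j ∈ odds, (K * μ ^ (m j : ℕ))) := mul_le_mul hA hB hBnn hAnn
        _ = (K * β) ^ N * K ^ (N - 1) *
            ((∏ j ∈ evens, μ ^ (m j : ℕ)) * (∏ j ∈ odds, μ ^ (m j : ℕ))) *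
            (g (m i0 : ℕ) * G (Φ m)) := by rw [e1, e2, e4]; ring
        _ = K ^ (2 * N - 1) * β ^ N * μ ^ n * G (Φ m) * g (m i0 : ℕ) := by
            rw [e3, hKpow]; ring
        _ ≤ K ^ (2 * N - 1) * β ^ N * μ ^ n * G (Φ m) *
            ((2 * (N : ℝ) - 1) ^ ((d : ℝ) / 2) * (n : ℝ) ^ (-(d : ℝ) / 2)) := by
            apply mul_le_mul_of_nonneg_left hgm0
            have := hK.le; have := hβ.le; have := hμ.le; have := hG0 (Φ m)
            positivity
        _ = C * G (Φ m) := by rw [hC]; ring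
    · exact le_rfl
  refine le_trans step1 ?_
  have pull : ∀ (P : Prop) (x : ℝ), (if P then C * x else 0) = C * (if P then x else 0) := by
    intro P x; split_ifs
    · rfl
    · rw [mul_zero]
  simp only [pull]
  rw [← Finset.mul_sum]
  have hfinal : (∑ m : Fin (2 * N - 1) → Fin (n + 1), if diagCond N n m then G (Φ m) else 0)
      ≤ S ^ (N - 1) := by
    rw [← Finset.sum_filter]
    have hinj : ∀ m1 ∈ Finset.univ.filter (diagCond N n),
        ∀ m2 ∈ Finset.univ.filter (diagCond N n), Φ m1 = Φ m2 → m1 = m2 := by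
      intro m1 hm1 m2 hm2 heq
      simp only [Finset.mem_filter, Finset.mem_univ, true_and] at hm1 hm2
      have hrest : ∀ j : Fin (2 * N - 1), j.1 ≠ 0 → m1 j = m2 j := by
        intro j hj0
        have hjb := j.2
        have hk : (j.1 - 1) / 2 < N - 1 := by omega
        have hcomp := congrFun heq ⟨(j.1 - 1) / 2, hk⟩
        simp only [hΦ, Prod.mk.injEq] at hcomp
        rcases Nat.even_or_odd j.1 with he | ho
        · have hjeq : (⟨2 * ((j.1 - 1) / 2) + 2, by
              obtain ⟨r, hr⟩ := he; omega⟩ : Fin (2 * N - 1)) = j := by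
            apply Fin.ext; simp; obtain ⟨r, hr⟩ := he; omega
          rw [← hjeq]
          exact hcomp.2
        · have hjeq : (⟨2 * ((j.1 - 1) / 2) + 1, by
              obtain ⟨r, hr⟩ := ho; omega⟩ : Fin (2 * N - 1)) = j := by
            apply Fin.ext; simp; obtain ⟨r, hr⟩ := ho; omega
          rw [← hjeq]
          exact hcomp.1
      funext j
      by_cases hj0 : j.1 = 0
      · obtain ⟨hs1, -, -, -⟩ := hm1
        obtain ⟨hs2, -, -, -⟩ := hm2
        have e1 := Finset.add_sum_erase Finset.univ (fun j => (m1 j : ℕ)) (Finset.mem_univ j)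
        have e2 := Finset.add_sum_erase Finset.univ (fun j => (m2 j : ℕ)) (Finset.mem_univ j)
        have hee : ∑ x ∈ Finset.univ.erase j, (m1 x : ℕ)
            = ∑ x ∈ Finset.univ.erase j, (m2 x : ℕ) := by
          apply Finset.sum_congr rfl
          intro x hx
          have hxj : x ≠ j := (Finset.mem_erase.mp hx).1
          have : x.1 ≠ 0 := fun h => hxj (Fin.ext (by rw [h, hj0]))
          rw [hrest x this]
        have e1' : (m1 j : ℕ) + ∑ x ∈ Finset.univ.erase j, (m1 x : ℕ) = n := by
          have h' : (m1 j : ℕ) + ∑ x ∈ Finset.univ.erase j, (m1 x : ℕ)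
              = ∑ x, (m1 x : ℕ) := e1
          exact h'.trans hs1
        have e2' : (m2 j : ℕ) + ∑ x ∈ Finset.univ.erase j, (m2 x : ℕ) = n := by
          have h' : (m2 j : ℕ) + ∑ x ∈ Finset.univ.erase j, (m2 x : ℕ)
              = ∑ x, (m2 x : ℕ) := e2
          exact h'.trans hs2
        apply Fin.ext
        omega
      · exact hrest j hj0
    rw [← Finset.sum_image hinj]
    set T := Finset.univ.filter
      (fun p : Fin (N - 1) → Fin (n + 1) × Fin (n + 1) =>
        ∀ k, 1 ≤ ((p k).1 : ℕ) ∧ ((p k).1 : ℕ) ≤ ((p k).2 : ℕ)) with hT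
    have himg : (Finset.univ.filter (diagCond N n)).image Φ ⊆ T := by
      intro p hp
      rw [Finset.mem_image] at hp
      obtain ⟨m, hm, rfl⟩ := hp
      simp only [Finset.mem_filter, Finset.mem_univ, true_and] at hm
      obtain ⟨-, -, -, hodd⟩ := hm
      rw [hT, Finset.mem_filter]
      refine ⟨Finset.mem_univ _, fun k => ?_⟩
      have hk2 := k.2
      have h := hodd ⟨2 * k.1 + 1, by omega⟩ (by simp)
      refine ⟨h.1, ?_⟩
      have h2 := h.2 (by simp; omega)
      exact h2
    refine le_trans (Finset.sum_le_sum_of_subset_of_nonneg himg (fun p _ _ => hG0 p)) ?_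
    rw [hT, Finset.sum_filter]
    have hsplit : ∀ p : Fin (N - 1) → Fin (n + 1) × Fin (n + 1),
        (if (∀ k, 1 ≤ ((p k).1 : ℕ) ∧ ((p k).1 : ℕ) ≤ ((p k).2 : ℕ)) then G p else 0)
        = ∏ k : Fin (N - 1),
            (if 1 ≤ ((p k).1 : ℕ) ∧ ((p k).1 : ℕ) ≤ ((p k).2 : ℕ) then g ((p k).2 : ℕ) else 0) := by
      intro p
      by_cases hp : ∀ k, 1 ≤ ((p k).1 : ℕ) ∧ ((p k).1 : ℕ) ≤ ((p k).2 : ℕ)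
      · rw [if_pos hp, hG]
        exact Finset.prod_congr rfl (fun k _ => by rw [if_pos (hp k)])
      · rw [if_neg hp]
        rw [Classical.not_forall] at hp
        obtain ⟨k, hk⟩ := hp
        symm
        apply Finset.prod_eq_zero (Finset.mem_univ k)
        rw [if_neg hk]
    rw [Finset.sum_congr rfl (fun p _ => hsplit p)]
    rw [← Fintype.sum_pow
      (fun x : Fin (n + 1) × Fin (n + 1) =>
        if 1 ≤ (x.1 : ℕ) ∧ (x.1 : ℕ) ≤ (x.2 : ℕ) then g (x.2 : ℕ) else 0) (N - 1)]
    have hnn : (0 : ℝ) ≤ ∑ x : Fin (n + 1) × Fin (n + 1),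
        (if 1 ≤ (x.1 : ℕ) ∧ (x.1 : ℕ) ≤ (x.2 : ℕ) then g (x.2 : ℕ) else 0) := by
      apply Finset.sum_nonneg
      intro x _
      split_ifs
      · exact hg0 _
      · exact le_rfl
    have hfac : (∑ x : Fin (n + 1) × Fin (n + 1),
        (if 1 ≤ (x.1 : ℕ) ∧ (x.1 : ℕ) ≤ (x.2 : ℕ) then g (x.2 : ℕ) else 0)) ≤ S := by
      rw [hg, hS]
      exact pairSum_le d hd n
    exact pow_le_pow_left₀ hnn hfac (N - 1)
  calc C * (∑ m : Fin (2 * N - 1) → Fin (n + 1), if diagCond N n m then G (Φ m) else 0)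
      ≤ C * S ^ (N - 1) := mul_le_mul_of_nonneg_left hfinal hC0
    _ = K ^ (2 * N - 1) * ((2 * (N : ℝ) - 1)) ^ ((d : ℝ) / 2) * β ^ N * μ ^ n *
        (n : ℝ) ^ (-(d : ℝ) / 2) * S ^ (N - 1) := by rw [hC]



lemma two_mul_sub_one_le_two_pow (N : ℕ) : 2 * N - 1 ≤ 2 ^ N := by
  induction N with
  | zero => simp
  | succ k ih =>
    have h1 : 1 ≤ 2 ^ k := Nat.one_le_two_pow
    have h2 : k < 2 ^ k := Nat.lt_two_pow_self
    rw [pow_succ]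
    omega

lemma innerDiagSum_nonneg (a b : ℕ → ℝ) (ha0 : ∀ m, 0 ≤ a m) (hb0 : ∀ m, 0 ≤ b m) (N n : ℕ) :
    0 ≤ innerDiagSum a b N n := by
  unfold innerDiagSum
  apply Finset.sum_nonneg
  intro m _
  split_ifs
  · exact mul_nonneg (Finset.prod_nonneg fun j _ => ha0 _)
      (Finset.prod_nonneg fun j _ => hb0 _)
  · exact le_rfl

set_option maxHeartbeats 1000000 in
/-- the combinatorial core of the lace-expansion convergence
(Lemma 3.1(i)).  For `d ≥ 5` there are `β₀, K' > 0`, depending only on `d, κ, K`,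
such that whenever `a_m ≤ K β μ^m m^{-d/2}` and `b_m ≤ K μ^m` for `1 ≤ m < n`
and `0 < β ≤ β₀`, the full diagrammatic sum over `N ≥ 2` is at most
`K' β² μ^n n^{-d/2}`; and moreover for each fixed `N ≥ 2` the inner sum is at
most `K^{2N-1} (2N-1)^{d/2} β^N μ^n n^{-d/2} (Σ_{m ≥ 1} m^{-d/2+1})^{N-1}`. -/
theorem diagrammatic_sum_bound
    (d : ℕ) (hd : 5 ≤ d) (κ K : ℝ) (hκ : 0 ≤ κ) (hK : 0 < K) :
    ∃ β₀ K' : ℝ, 0 < β₀ ∧ 0 < K' ∧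
      ∀ (μ β : ℝ) (n : ℕ) (a b : ℕ → ℝ),
        0 < μ → 0 < β → β ≤ β₀ → 1 ≤ n →
        (∀ m, 0 ≤ a m) → (∀ m, 0 ≤ b m) →
        (∀ m : ℕ, 1 ≤ m → m < n → a m ≤ K * β * μ ^ m * (m : ℝ) ^ (-(d : ℝ) / 2)) →
        (∀ m : ℕ, 1 ≤ m → m < n → b m ≤ K * μ ^ m) →
        (∀ N : ℕ, 2 ≤ N →
          innerDiagSum a b N n ≤
            K ^ (2 * N - 1) * ((2 * (N : ℝ) - 1)) ^ ((d : ℝ) / 2) * β ^ N * μ ^ n *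
              (n : ℝ) ^ (-(d : ℝ) / 2) *
              (∑' m : ℕ, ((m : ℝ) + 1) ^ (-(d : ℝ) / 2 + 1)) ^ (N - 1)) ∧
        (∑' N : ℕ, (if 2 ≤ N then
            (2 * (N : ℝ) - 1) * 2 ^ (N - 1) * (1 + 2 * d * κ) ^ N * innerDiagSum a b N n
          else 0)) ≤ K' * β ^ 2 * μ ^ n * (n : ℝ) ^ (-(d : ℝ) / 2) := by
  classical
  set S := ∑' m : ℕ, ((m : ℝ) + 1) ^ (-(d : ℝ) / 2 + 1) with hS
  have hS1 : 1 ≤ S := S_ge_one d hd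
  have hS0 : 0 < S := lt_of_lt_of_le zero_lt_one hS1
  have hd0 : (0 : ℝ) ≤ (d : ℝ) := Nat.cast_nonneg d
  have hdR : (5 : ℝ) ≤ (d : ℝ) := by exact_mod_cast hd
  have hcoef1 : (1 : ℝ) ≤ 1 + 2 * d * κ := by
    have h2 : (0 : ℝ) ≤ 2 * (d : ℝ) * κ := by positivity
    linarith
  have hcoef0 : (0 : ℝ) < 1 + 2 * d * κ := lt_of_lt_of_le zero_lt_one hcoef1
  set q : ℝ := 2 ^ (d + 2) * (1 + 2 * d * κ) * K ^ 2 * S with hq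
  have hq0 : 0 < q :=
    mul_pos (mul_pos (mul_pos (by positivity) hcoef0) (by positivity)) hS0
  refine ⟨1 / (2 * q), 8 * q ^ 2 / (K * S), by positivity, by positivity, ?_⟩
  intro μ β n a b hμ hβ hβ0 hn ha0 hb0 ha hb
  have hqβ0 : 0 ≤ q * β := le_of_lt (mul_pos hq0 hβ)
  have hqβ : q * β ≤ 1 / 2 := by
    have hm := mul_le_mul_of_nonneg_left hβ0 hq0.le
    calc q * β ≤ q * (1 / (2 * q)) := hm
      _ = 1 / 2 := by field_simp
  constructor
  · intro N hN
    exact inner_bound d hd K hK μ β hμ hβ n a b ha0 hb0 ha hb N hN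
  · set p : ℝ := -(d : ℝ) / 2 with hp
    set D : ℝ := μ ^ n * (n : ℝ) ^ p / (K * S) with hD
    have hnp0 : (0 : ℝ) ≤ (n : ℝ) ^ p := Real.rpow_nonneg (Nat.cast_nonneg n) _
    have hD0 : 0 ≤ D := div_nonneg (mul_nonneg (by positivity) hnp0) (by positivity)
    set f : ℕ → ℝ := fun N => (if 2 ≤ N then
        (2 * (N : ℝ) - 1) * 2 ^ (N - 1) * (1 + 2 * d * κ) ^ N * innerDiagSum a b N n
      else 0) with hf
    set h : ℕ → ℝ := fun N => D * (4 * q ^ 2 * β ^ 2) * (1 / 2 : ℝ) ^ N with hh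
    have hh0 : ∀ N, 0 ≤ h N := fun N =>
      mul_nonneg (mul_nonneg hD0 (by positivity)) (by positivity)
    have hf0 : ∀ N, 0 ≤ f N := by
      intro N
      rw [hf]
      dsimp only
      split_ifs with hN2
      · have hN1R : (1 : ℝ) ≤ (N : ℝ) := by exact_mod_cast (by omega : 1 ≤ N)
        refine mul_nonneg (mul_nonneg (mul_nonneg (by linarith) (by positivity))
          (pow_nonneg hcoef0.le N)) (innerDiagSum_nonneg a b ha0 hb0 N n)
      · exact le_rfl
    have hbound : ∀ N, f N ≤ h N := by
      intro N
      rw [hf, hh]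
      dsimp only
      split_ifs with hN2
      · have hN1R : (1 : ℝ) ≤ (N : ℝ) := by exact_mod_cast (by omega : 1 ≤ N)
        have hI := inner_bound d hd K hK μ β hμ hβ n a b ha0 hb0 ha hb N hN2
        rw [← hS, ← hp] at hI
        have hc0 : (0 : ℝ) ≤ (2 * (N : ℝ) - 1) * 2 ^ (N - 1) * (1 + 2 * d * κ) ^ N :=
          mul_nonneg (mul_nonneg (by linarith) (by positivity)) (pow_nonneg hcoef0.le N)
        have step := mul_le_mul_of_nonneg_left hI hc0
        refine le_trans step ?_
        have hbase1 : (1 : ℝ) ≤ 2 * (N : ℝ) - 1 := by linarith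
        have A1 : 2 * (N : ℝ) - 1 ≤ 2 ^ N := by
          have h1 := two_mul_sub_one_le_two_pow N
          have h2 : ((2 * N - 1 : ℕ) : ℝ) = 2 * (N : ℝ) - 1 := by
            push_cast [Nat.cast_sub (by omega : 1 ≤ 2 * N)]; ring
          calc 2 * (N : ℝ) - 1 = ((2 * N - 1 : ℕ) : ℝ) := h2.symm
            _ ≤ ((2 ^ N : ℕ) : ℝ) := by exact_mod_cast h1
            _ = 2 ^ N := by push_cast; ring
        have A2 : (2 * (N : ℝ) - 1) ^ ((d : ℝ) / 2) ≤ ((2 : ℝ) ^ d) ^ N := by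
          calc (2 * (N : ℝ) - 1) ^ ((d : ℝ) / 2)
              ≤ (2 * (N : ℝ) - 1) ^ ((d : ℝ)) :=
                Real.rpow_le_rpow_of_exponent_le hbase1 (by linarith)
            _ = (2 * (N : ℝ) - 1) ^ (d : ℕ) := Real.rpow_natCast _ d
            _ ≤ ((2 : ℝ) ^ N) ^ (d : ℕ) := pow_le_pow_left₀ (by linarith) A1 d
            _ = ((2 : ℝ) ^ d) ^ N := by rw [← pow_mul, ← pow_mul, mul_comm]
        have A3 : (2 : ℝ) ^ (N - 1) ≤ 2 ^ N :=
          pow_le_pow_right₀ (by norm_num) (by omega)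
        set R : ℝ := (1 + 2 * d * κ) ^ N * K ^ (2 * N - 1) * β ^ N * μ ^ n * (n : ℝ) ^ p *
            S ^ (N - 1) with hR
        have hR0 : 0 ≤ R := by
          refine mul_nonneg (mul_nonneg (mul_nonneg (mul_nonneg (mul_nonneg
            (pow_nonneg hcoef0.le N) (by positivity)) (pow_nonneg hβ.le N))
            (pow_nonneg hμ.le n)) hnp0) (pow_nonneg hS0.le (N - 1))
        have E3 : ((2 : ℝ) ^ N * ((2 : ℝ) ^ d) ^ N) * (2 : ℝ) ^ N * R = (q * β) ^ N * D := by
          rw [hR, hq, hD]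
          have hKe : K ^ (2 * N) = K ^ (2 * N - 1) * K := by
            rw [← pow_succ]; congr 1; omega
          have hSe : S ^ N = S ^ (N - 1) * S := by
            rw [← pow_succ]; congr 1; omega
          have hexp : ((2 : ℝ) ^ (d + 2) * (1 + 2 * d * κ) * K ^ 2 * S * β) ^ N
              = ((2 : ℝ) ^ (d + 2)) ^ N * (1 + 2 * d * κ) ^ N * (K ^ 2) ^ N * S ^ N * β ^ N := by
            rw [mul_pow, mul_pow, mul_pow, mul_pow]
          have h2e : ((2 : ℝ) ^ (d + 2)) ^ N = 2 ^ N * (2 ^ d) ^ N * 2 ^ N := by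
            rw [← pow_mul, ← pow_mul, ← pow_add, ← pow_add]
            congr 1
            ring
          rw [hexp, h2e, show ((K ^ 2) ^ N : ℝ) = K ^ (2 * N) from (pow_mul K 2 N).symm,
            hKe, hSe]
          field_simp
        have hsplitN : (q * β) ^ N = (q * β) ^ 2 * (q * β) ^ (N - 2) := by
          rw [← pow_add]; congr 1; omega
        have hhalf : ((1 : ℝ) / 2) ^ (N - 2) = 4 * (1 / 2) ^ N := by
          have he : ((1 : ℝ) / 2) ^ N = (1 / 2) ^ 2 * (1 / 2) ^ (N - 2) := by
            rw [← pow_add]; congr 1; omega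
          rw [he]; ring
        calc (2 * (N : ℝ) - 1) * 2 ^ (N - 1) * (1 + 2 * d * κ) ^ N *
            (K ^ (2 * N - 1) * (2 * (N : ℝ) - 1) ^ ((d : ℝ) / 2) * β ^ N * μ ^ n *
              (n : ℝ) ^ p * S ^ (N - 1))
            = ((2 * (N : ℝ) - 1) * (2 * (N : ℝ) - 1) ^ ((d : ℝ) / 2)) * (2 : ℝ) ^ (N - 1) * R := by
              rw [hR]; ring
          _ ≤ ((2 : ℝ) ^ N * ((2 : ℝ) ^ d) ^ N) * (2 : ℝ) ^ N * R := by
              apply mul_le_mul_of_nonneg_right _ hR0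
              apply mul_le_mul _ A3 (by positivity) (by positivity)
              exact mul_le_mul A1 A2 (Real.rpow_nonneg (by linarith) _) (by positivity)
          _ = (q * β) ^ N * D := E3
          _ = ((q * β) ^ 2 * (q * β) ^ (N - 2)) * D := by rw [hsplitN]
          _ ≤ ((q * β) ^ 2 * (1 / 2) ^ (N - 2)) * D := by
              apply mul_le_mul_of_nonneg_right _ hD0
              exact mul_le_mul_of_nonneg_left (pow_le_pow_left₀ hqβ0 hqβ _) (by positivity)
          _ = D * (4 * q ^ 2 * β ^ 2) * (1 / 2) ^ N := by rw [hhalf, mul_pow]; ring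
      · exact hh0 N
    have hhsum : Summable h := by
      rw [hh]
      exact (summable_geometric_of_lt_one (by norm_num) (by norm_num)).mul_left _
    have hfsum : Summable f := Summable.of_nonneg_of_le hf0 hbound hhsum
    have htsum : ∑' N, f N ≤ ∑' N, h N := Summable.tsum_le_tsum hbound hfsum hhsum
    refine le_trans htsum ?_
    have hth : ∑' N, h N = D * (4 * q ^ 2 * β ^ 2) * 2 := by
      rw [hh, tsum_mul_left, tsum_geometric_of_lt_one (by norm_num) (by norm_num)]
      norm_num
    rw [hth, hD]
    apply le_of_eq
    field_simp
    ring


end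
end
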